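/- arXiv:1905.08056 — 10 statements merged into one kernel-verified Lean document; each statement's English description precedes it below -/
import Mathlib

section
/- Let n ≥ 1, let M ⊆ ℤⁿ be a finite nonempty set, let c : M → ℝ, and let T ⊆ ℝⁿ be the tropical hypersurface associated to (M, c). Then for every line L ⊆ ℝⁿ such that L ∩ T is a finite set, the cardinality of L ∩ T is at most #M − 1. -/
/-- The value of the tropical monomial with exponent `α` and coefficient `c α` at `x`. -/
noncomputable def tropVal (n : ℕ) (c : (Fin n → ℤ) → ℝ) (α : Fin n → ℤ) (x : Fin n → ℝ) : ℝ :=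
  (∑ i, x i * (α i : ℝ)) + c α

/-- The tropical hypersurface associated to the support `M` and coefficients `c`:
the set of points where the maximum of the tropical monomials is attained at least twice. -/
def tropHypersurface (n : ℕ) (M : Finset (Fin n → ℤ)) (c : (Fin n → ℤ) → ℝ) :
    Set (Fin n → ℝ) :=
  {x | ∃ α ∈ M, ∃ β ∈ M, α ≠ β ∧ tropVal n c α x = tropVal n c β x ∧
    ∀ γ ∈ M, tropVal n c γ x ≤ tropVal n c α x}


open Set Filter

lemma tropKey {ι : Type*} (M : Finset ι) (hM : M.Nonempty) (a : ι → ℝ) (ℓ : ι → ℝ → ℝ)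
    (haff : ∀ α s t, ℓ α s = ℓ α t + a α * (s - t))
    (T' : Set ℝ)
    (hT' : ∀ t, t ∈ T' ↔ ∃ α ∈ M, ∃ β ∈ M, α ≠ β ∧ ℓ α t = ℓ β t ∧ ∀ γ ∈ M, ℓ γ t ≤ ℓ α t)
    (hfin : T'.Finite) :
    T'.ncard ≤ M.card - 1 := by
  classical
  -- Lemma A: at each tie point, there are attainers of two different slopes
  have lemA : ∀ t ∈ T', ∃ γ, (γ ∈ M ∧ ∀ ε ∈ M, ℓ ε t ≤ ℓ γ t) ∧
      ∃ δ, (δ ∈ M ∧ ∀ ε ∈ M, ℓ ε t ≤ ℓ δ t) ∧ a δ < a γ := by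
    intro t ht
    obtain ⟨α, hαM, β, hβM, hne, hval, hmax⟩ := (hT' t).1 ht
    by_contra hcon
    push_neg at hcon
    have hall : ∀ γ, (γ ∈ M ∧ ∀ ε ∈ M, ℓ ε t ≤ ℓ γ t) →
        ∀ δ, (δ ∈ M ∧ ∀ ε ∈ M, ℓ ε t ≤ ℓ δ t) → a γ = a δ := by
      intro γ hγ δ hδ
      exact le_antisymm (hcon γ hγ δ hδ) (hcon δ hδ γ hγ)
    have hβmax : ∀ ε ∈ M, ℓ ε t ≤ ℓ β t := fun ε hε => hval ▸ hmax ε hε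
    have habe : a α = a β := hall α ⟨hαM, hmax⟩ β ⟨hβM, hβmax⟩
    have hsame : ∀ s, ℓ α s = ℓ β s := by
      intro s
      rw [haff α s t, haff β s t, hval, habe]
    have hev : ∀ᶠ s in nhds t, ∀ γ ∈ M, ℓ γ s ≤ ℓ α s := by
      rw [eventually_all_finset]
      intro γ hγ
      rcases eq_or_lt_of_le (hmax γ hγ) with h | h
      · have hγmax : ∀ ε ∈ M, ℓ ε t ≤ ℓ γ t := fun ε hε => h ▸ hmax ε hε
        have hsl : a γ = a α := hall γ ⟨hγ, hγmax⟩ α ⟨hαM, hmax⟩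
        filter_upwards with s
        rw [haff γ s t, haff α s t, ← h, hsl]
      · have hc : ∀ ε : ι, Continuous (ℓ ε) := by
          intro ε
          have : ℓ ε = fun s => ℓ ε 0 + a ε * (s - 0) := funext fun s => haff ε s 0
          rw [this]; fun_prop
        have htd : Filter.Tendsto (fun s => ℓ γ s - ℓ α s) (nhds t) (nhds (ℓ γ t - ℓ α t)) :=
          ((hc γ).sub (hc α)).continuousAt
        have := htd.eventually_lt_const (by linarith : ℓ γ t - ℓ α t < 0)
        filter_upwards [this] with s hs; linarith
    have hTn : T' ∈ nhds t := by
      filter_upwards [hev] with s hs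
      exact (hT' s).2 ⟨α, hαM, β, hβM, hne, hsame s, hs⟩
    obtain ⟨ε, hε, hball⟩ := Metric.mem_nhds_iff.1 hTn
    rw [Real.ball_eq_Ioo] at hball
    exact (Set.Ioo_infinite (by linarith)).mono hball hfin
  -- Lemma B: if α attains max at t and t', it attains it in between
  have lemB : ∀ (α : ι), ∀ t t' s : ℝ, t < s → s < t' →
      (∀ ε ∈ M, ℓ ε t ≤ ℓ α t) → (∀ ε ∈ M, ℓ ε t' ≤ ℓ α t') →
      ∀ γ ∈ M, ℓ γ s ≤ ℓ α s := by
    intro α t t' s hts hst' h1 h2 γ hγ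
    have e1 : ℓ γ s = ℓ γ t + a γ * (s - t) := haff γ s t
    have e2 : ℓ α s = ℓ α t + a α * (s - t) := haff α s t
    have e3 : ℓ γ t' = ℓ γ t + a γ * (t' - t) := haff γ t' t
    have e4 : ℓ α t' = ℓ α t + a α * (t' - t) := haff α t' t
    have h1' := h1 γ hγ
    have h2' := h2 γ hγ
    rcases le_or_gt (a γ) (a α) with h | h
    · nlinarith
    · nlinarith
  -- choose a minimal-slope element
  obtain ⟨α₀, hα₀M, hα₀⟩ := M.exists_min_image a hM
  -- choose, for each tie point, an attainer of maximal slope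
  have hex : ∀ t : ℝ, ∃ γ, t ∈ T' →
      γ ∈ M ∧ (∀ ε ∈ M, ℓ ε t ≤ ℓ γ t) ∧
      ∀ δ ∈ M, (∀ ε ∈ M, ℓ ε t ≤ ℓ δ t) → a δ ≤ a γ := by
    intro t
    by_cases ht : t ∈ T'
    · obtain ⟨α, hαM, β, hβM, hne, hval, hmax⟩ := (hT' t).1 ht
      have hA : (M.filter (fun δ => ∀ ε ∈ M, ℓ ε t ≤ ℓ δ t)).Nonempty :=
        ⟨α, Finset.mem_filter.2 ⟨hαM, hmax⟩⟩
      obtain ⟨γ, hγ, hγmax⟩ := Finset.exists_max_image _ a hA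
      rw [Finset.mem_filter] at hγ
      refine ⟨γ, fun _ => ⟨hγ.1, hγ.2, fun δ hδM hδ => ?_⟩⟩
      exact hγmax δ (Finset.mem_filter.2 ⟨hδM, hδ⟩)
    · exact ⟨hM.choose, fun h => absurd h ht⟩
  choose f hf using hex
  -- f maps T' into M.erase α₀
  have hmaps : ∀ t ∈ T', f t ∈ (↑(M.erase α₀) : Set ι) := by
    intro t ht
    obtain ⟨hfM, hfmax, hfsl⟩ := hf t ht
    obtain ⟨γ, ⟨hγM, hγmax⟩, δ, ⟨hδM, hδmax⟩, hlt⟩ := lemA t ht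
    have h1 : a δ < a (f t) := lt_of_lt_of_le hlt (hfsl γ hγM hγmax)
    have h2 : a α₀ < a (f t) := lt_of_le_of_lt (hα₀ δ hδM) h1
    simp only [Finset.coe_erase, Set.mem_diff, Set.mem_singleton_iff]
    exact ⟨hfM, fun h => absurd (h ▸ h2) (lt_irrefl _)⟩
  -- f is injective on T'
  have hinjaux : ∀ t ∈ T', ∀ t' ∈ T', t < t' → f t = f t' → False := by
    intro t ht t' ht' hlt heq
    obtain ⟨hfM, hfmax, _⟩ := hf t ht
    obtain ⟨hfM', hfmax', hfsl'⟩ := hf t' ht'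
    rw [heq] at hfmax
    obtain ⟨γ, ⟨hγM, hγmax⟩, δ, ⟨hδM, hδmax⟩, hslt⟩ := lemA t' ht'
    have hδlt : a δ < a (f t') := lt_of_lt_of_le hslt (hfsl' γ hγM hγmax)
    have hδval : ℓ δ t' = ℓ (f t') t' := le_antisymm (hfmax' δ hδM) (hδmax (f t') hfM')
    set s := (t + t') / 2 with hs
    have h1 : t < s := by rw [hs]; linarith
    have h2 : s < t' := by rw [hs]; linarith
    have h3 : ℓ δ s ≤ ℓ (f t') s := lemB (f t') t t' s h1 h2 hfmax hfmax' δ hδM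
    have e1 : ℓ δ s = ℓ δ t' + a δ * (s - t') := haff δ s t'
    have e2 : ℓ (f t') s = ℓ (f t') t' + a (f t') * (s - t') := haff (f t') s t'
    nlinarith
  have hinj : Set.InjOn f T' := by
    intro t ht t' ht' heq
    rcases lt_trichotomy t t' with h | h | h
    · exact (hinjaux t ht t' ht' h heq).elim
    · exact h
    · exact (hinjaux t' ht' t ht h heq.symm).elim
  have := Set.ncard_le_ncard_of_injOn f hmaps hinj (Set.toFinite _)
  rwa [Set.ncard_coe_finset, Finset.card_erase_of_mem hα₀M] at this

theorem stmt0 (n : ℕ) (hn : 1 ≤ n) (M : Finset (Fin n → ℤ)) (hM : M.Nonempty)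
    (c : (Fin n → ℤ) → ℝ) (u v : Fin n → ℝ) (hv : v ≠ 0)
    (L : Set (Fin n → ℝ)) (hL : L = Set.range fun t : ℝ => u + t • v)
    (hfin : (L ∩ tropHypersurface n M c).Finite) :
    (L ∩ tropHypersurface n M c).ncard ≤ M.card - 1 := by
  classical
  set ℓ : (Fin n → ℤ) → ℝ → ℝ := fun α t => tropVal n c α (u + t • v) with hℓ
  set a : (Fin n → ℤ) → ℝ := fun α => ∑ i, v i * (α i : ℝ) with ha
  have haff : ∀ α s t, ℓ α s = ℓ α t + a α * (s - t) := by
    intro α s t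
    simp only [hℓ, ha, tropVal, Pi.add_apply, Pi.smul_apply, smul_eq_mul]
    rw [Finset.sum_mul]
    have h : ∑ x, (u x + s * v x) * (α x : ℝ)
        = ∑ x, ((u x + t * v x) * (α x : ℝ) + v x * (α x : ℝ) * (s - t)) :=
      Finset.sum_congr rfl (fun i _ => by ring)
    rw [h, Finset.sum_add_distrib]
    ring
  set T' : Set ℝ := {t | u + t • v ∈ tropHypersurface n M c} with hT'def
  have hT' : ∀ t, t ∈ T' ↔ ∃ α ∈ M, ∃ β ∈ M, α ≠ β ∧ ℓ α t = ℓ β t ∧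
      ∀ γ ∈ M, ℓ γ t ≤ ℓ α t := fun t => Iff.rfl
  have hpinj : Function.Injective (fun t : ℝ => u + t • v) := by
    intro s t h
    simp only [add_right_inj] at h
    have : (s - t) • v = 0 := by rw [sub_smul, h, sub_self]
    rcases smul_eq_zero.1 this with h' | h'
    · linarith [sub_eq_zero.1 (by exact_mod_cast h')]
    · exact absurd h' hv
  have himg : L ∩ tropHypersurface n M c = (fun t : ℝ => u + t • v) '' T' := by
    rw [hL, ← Set.image_preimage_eq_range_inter]
    rfl
  have hfinT' : T'.Finite :=
    Set.Finite.of_finite_image (himg ▸ hfin) (hpinj.injOn)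
  rw [himg, Set.ncard_image_of_injective _ hpinj]
  exact tropKey M hM a ℓ haff T' hT' hfinT'
end

section
/- For every n ≥ 1 and every finite nonempty set M ⊆ ℤⁿ there exist coefficients c : M → ℝ and a line L ⊆ ℝⁿ such that the intersection of L with the tropical hypersurface T associated to (M, c) is finite and consists of exactly #M − 1 points. -/
/-!
Choose a direction `v` along which the exponents have pairwise distinct slopes `s α = ⟨v, α⟩`
(finitely many hyperplanes do not cover `ℝⁿ`), and take `c α = -(s α)² / 2`. On the line
`t ↦ t • v` the monomial `α` becomes `t² / 2 - (t - s α)² / 2`, so the maximum is attained twice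
exactly where `t` has two nearest points among the slopes: at the midpoints of the `#M - 1` gaps
between consecutive slopes.
-/

open Set

theorem Module.Dual.exists_forall_apply_ne_zero {K E : Type*} [Field K] [Infinite K]
    [AddCommGroup E] [Module K E] (F : Finset (Module.Dual K E)) (hF : 0 ∉ F) :
    ∃ v, ∀ f ∈ F, f v ≠ 0 := by
  classical
  by_contra! h
  have hcover : ⋃ p ∈ F.image LinearMap.ker, (p : Set E) = univ := by
    refine eq_univ_of_forall fun v => ?_
    obtain ⟨f, hf, hfv⟩ := h v
    exact mem_biUnion (Finset.mem_image_of_mem _ hf) hfv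
  obtain ⟨f, hf, hker⟩ := Finset.mem_image.mp (Subspace.top_mem_of_biUnion_eq_univ hcover)
  exact hF (LinearMap.ker_eq_top.mp hker ▸ hf)

theorem exists_ne_zero_injOn_dotProduct {K ι : Type*} [Field K] [Infinite K] [Fintype ι]
    [Nonempty ι] (S : Finset (ι → K)) : ∃ v ≠ 0, InjOn (v ⬝ᵥ ·) (S : Set (ι → K)) := by
  classical
  let i := Classical.arbitrary ι
  obtain ⟨v, hv⟩ := Module.Dual.exists_forall_apply_ne_zero
    (insert (LinearMap.proj i) (S.offDiag.image fun p => dotProductEquiv K ι (p.1 - p.2))) (by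
      simp only [Finset.mem_insert, Finset.mem_image, Finset.mem_offDiag, not_or, not_exists]
      refine ⟨fun h => by simpa using LinearMap.congr_fun h (Pi.single i 1), ?_⟩
      rintro p ⟨⟨-, -, hp⟩, h⟩
      exact hp (sub_eq_zero.mp ((dotProductEquiv K ι).map_eq_zero_iff.mp h)))
  refine ⟨v, fun h => hv _ (Finset.mem_insert_self _ _) (by simp [h]), fun a ha b hb hab => ?_⟩
  by_contra hne
  refine hv _ (Finset.mem_insert_of_mem (Finset.mem_image_of_mem _
    (Finset.mem_offDiag (x := (a, b)) |>.mpr ⟨ha, hb, hne⟩))) ?_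
  simp [dotProduct_comm _ v, hab]

def voronoiBoundary (S : Set ℝ) : Set ℝ :=
  {t | ∃ a ∈ S, ∃ b ∈ S, a ≠ b ∧ dist t a = dist t b ∧ ∀ c ∈ S, dist t a ≤ dist t c}

theorem voronoiBoundary_range_of_strictMono {m : ℕ} {E : Fin (m + 1) → ℝ} (hE : StrictMono E) :
    voronoiBoundary (range E) = range fun k : Fin m => (E k.castSucc + E k.succ) / 2 := by
  ext t
  constructor
  · rintro ⟨_, ⟨i, rfl⟩, _, ⟨j, rfl⟩, hne, heq, hmin⟩
    wlog hij : i < j generalizing i j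
    · exact this j i hne.symm heq.symm (heq ▸ hmin)
        ((lt_or_gt_of_ne fun h => hne (congrArg E h)).resolve_left hij)
    have hlt := hE hij
    rw [Real.dist_eq, Real.dist_eq] at heq
    have ht : t = (E i + E j) / 2 := by
      rcases abs_eq_abs.mp heq with h | h <;> linarith
    have hsucc : j.val = i.val + 1 := by
      by_contra hgap
      let l : Fin (m + 1) := ⟨i + 1, by omega⟩
      have hil := hE (show i < l from Fin.lt_def.mpr (Nat.lt_succ_self _))
      have hlj := hE (show l < j from Fin.lt_def.mpr (by simp only [l]; omega))
      have := hmin _ (mem_range_self l)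
      rw [Real.dist_eq, Real.dist_eq, ht, abs_of_pos (by linarith)] at this
      exact this.not_gt (abs_lt.mpr ⟨by linarith, by linarith⟩)
    let k : Fin m := ⟨i, by omega⟩
    have hi : k.castSucc = i := rfl
    have hj : k.succ = j := Fin.ext hsucc.symm
    exact ⟨k, by simp only [hi, hj, ht]⟩
  · rintro ⟨k, rfl⟩
    have hlt := hE k.castSucc_lt_succ
    refine ⟨_, mem_range_self _, _, mem_range_self _, hlt.ne, ?_, ?_⟩
    · rw [Real.dist_eq, Real.dist_eq, abs_of_pos (by linarith), abs_of_neg (by linarith)]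
      ring
    · rintro _ ⟨j, rfl⟩
      rw [Real.dist_eq, Real.dist_eq, abs_of_pos (by linarith)]
      rcases le_or_gt j k.castSucc with hj | hj
      · have := hE.monotone hj
        exact (by linarith : _ ≤ _).trans (le_abs_self _)
      · have := hE.monotone (Fin.castSucc_lt_iff_succ_le.mp hj)
        exact (by linarith : _ ≤ _).trans (neg_le_abs _)

theorem exists_strictMono_voronoiBoundary_eq_range (S : Finset ℝ) :
    ∃ g : Fin (S.card - 1) → ℝ, StrictMono g ∧ voronoiBoundary S = range g := by
  rcases S.eq_empty_or_nonempty with rfl | hS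
  · refine ⟨fun k => absurd k.2 (by simp), fun k => absurd k.2 (by simp), ?_⟩
    simp [voronoiBoundary]
  obtain ⟨m, hm⟩ : ∃ m, S.card = m + 1 := ⟨S.card - 1, by have := hS.card_pos; omega⟩
  rw [hm, Nat.add_sub_cancel, ← S.range_orderEmbOfFin hm,
    voronoiBoundary_range_of_strictMono (S.orderEmbOfFin hm).strictMono]
  refine ⟨_, fun k l hkl => ?_, rfl⟩
  have := (S.orderEmbOfFin hm).strictMono (Fin.castSucc_lt_castSucc_iff.mpr hkl)
  have := (S.orderEmbOfFin hm).strictMono (Fin.succ_lt_succ_iff.mpr hkl)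
  linarith

noncomputable def paraboloidCoeff {n : ℕ} (v : Fin n → ℝ) (α : Fin n → ℤ) : ℝ :=
  -(v ⬝ᵥ (Int.cast ∘ α)) ^ 2 / 2

theorem tropVal_paraboloidCoeff_smul {n : ℕ} (v : Fin n → ℝ) (α : Fin n → ℤ) (t : ℝ) :
    tropVal n (paraboloidCoeff v) α (t • v) = (t ^ 2 - dist t (v ⬝ᵥ (Int.cast ∘ α)) ^ 2) / 2 := by
  rw [Real.dist_eq, sq_abs]
  change (t • v) ⬝ᵥ (Int.cast ∘ α) + paraboloidCoeff v α = _
  rw [smul_dotProduct, paraboloidCoeff, smul_eq_mul]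
  ring

theorem tropVal_paraboloidCoeff_smul_le_iff {n : ℕ} (v : Fin n → ℝ) (α β : Fin n → ℤ) (t : ℝ) :
    tropVal n (paraboloidCoeff v) α (t • v) ≤ tropVal n (paraboloidCoeff v) β (t • v) ↔
      dist t (v ⬝ᵥ (Int.cast ∘ β)) ≤ dist t (v ⬝ᵥ (Int.cast ∘ α)) := by
  rw [tropVal_paraboloidCoeff_smul, tropVal_paraboloidCoeff_smul,
    ← sq_le_sq₀ dist_nonneg dist_nonneg]
  constructor <;> intro h <;> linarith

theorem smul_mem_tropHypersurface_iff {n : ℕ} {M : Finset (Fin n → ℤ)} {v : Fin n → ℝ}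
    (hv : InjOn (fun α : Fin n → ℤ => v ⬝ᵥ (Int.cast ∘ α)) M) (t : ℝ) :
    t • v ∈ tropHypersurface n M (paraboloidCoeff v) ↔
      t ∈ voronoiBoundary ((fun α : Fin n → ℤ => v ⬝ᵥ (Int.cast ∘ α)) '' M) := by
  simp only [tropHypersurface, voronoiBoundary, mem_ofPred_eq, forall_mem_image, exists_mem_image,
    Finset.mem_coe, le_antisymm_iff, tropVal_paraboloidCoeff_smul_le_iff]
  refine exists_congr fun α => and_congr_right fun hα =>
    exists_congr fun β => and_congr_right fun hβ => ?_
  exact and_congr (hv.ne_iff hα hβ).symm (and_congr and_comm Iff.rfl)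

theorem stmt1_general (n : ℕ) (hn : 1 ≤ n) (M : Finset (Fin n → ℤ)) :
    ∃ c : (Fin n → ℤ) → ℝ, ∃ u v : Fin n → ℝ, v ≠ 0 ∧
      ((Set.range fun t : ℝ => u + t • v) ∩ tropHypersurface n M c).Finite ∧
      ((Set.range fun t : ℝ => u + t • v) ∩ tropHypersurface n M c).ncard = M.card - 1 := by
  have : Nonempty (Fin n) := ⟨⟨0, hn⟩⟩
  obtain ⟨v, hv, hvM⟩ :=
    exists_ne_zero_injOn_dotProduct (M.image (Int.cast ∘ ·) : Finset (Fin n → ℝ))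
  set s := fun α : Fin n → ℤ => v ⬝ᵥ (Int.cast ∘ α)
  have hs : InjOn s M :=
    hvM.comp Int.cast_injective.comp_left.injOn fun _ hα => Finset.mem_image_of_mem _ hα
  obtain ⟨g, hg, hV⟩ := exists_strictMono_voronoiBoundary_eq_range (M.image s)
  have hline : (range fun t : ℝ => 0 + t • v) ∩ tropHypersurface n M (paraboloidCoeff v) =
      range ((· • v) ∘ g) := by
    rw [range_comp, ← hV, Finset.coe_image, ← image_preimage_eq_range_inter]
    simp only [zero_add]
    exact congrArg _ (Set.ext (smul_mem_tropHypersurface_iff hs))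
  refine ⟨paraboloidCoeff v, 0, v, hv, ?_, ?_⟩
  · rw [hline]
    exact finite_range _
  · rw [hline, ncard_range_of_injective ((smul_left_injective ℝ hv).comp hg.injective),
      Nat.card_fin, Finset.card_image_of_injOn hs]

theorem stmt1 (n : ℕ) (hn : 1 ≤ n) (M : Finset (Fin n → ℤ)) (hM : M.Nonempty) :
    ∃ c : (Fin n → ℤ) → ℝ, ∃ u v : Fin n → ℝ, v ≠ 0 ∧
      ((Set.range fun t : ℝ => u + t • v) ∩ tropHypersurface n M c).Finite ∧
      ((Set.range fun t : ℝ => u + t • v) ∩ tropHypersurface n M c).ncard = M.card - 1 :=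
  stmt1_general n hn M
end

section
/- Let n ≥ 1, let M ⊆ ℤⁿ be finite nonempty, let c : M → ℝ, and let T ⊆ ℝⁿ be the associated tropical hypersurface. For α ∈ M set U_α = {x ∈ ℝⁿ : ⟨x, α⟩ + c_α > ⟨x, β⟩ + c_β for all β ∈ M with β ≠ α}. Then: (i) each U_α is open and convex; (ii) the nonempty sets U_α are pairwise disjoint and are exactly the connected components of ℝⁿ ∖ T (in particular, the assignment sending a connected component of ℝⁿ ∖ T to its dominating exponent α is injective); (iii) if U_α is nonempty and unbounded, then α lies in the topological frontier in ℝⁿ of the convex hull of M. -/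
private lemma pairing_linear (n : ℕ) (w : Fin n → ℝ) :
    IsLinearMap ℝ (fun x : Fin n → ℝ => ∑ i, x i * w i) := by
  constructor
  · intro x y
    simp [add_mul, Finset.sum_add_distrib]
  · intro a x
    simp [Finset.mul_sum, mul_assoc]

private lemma pairing_linear' (n : ℕ) (w : Fin n → ℝ) :
    IsLinearMap ℝ (fun x : Fin n → ℝ => ∑ i, w i * x i) := by
  constructor
  · intro x y
    simp [mul_add, Finset.sum_add_distrib]
  · intro a x
    simp only [Pi.smul_apply, smul_eq_mul, Finset.mul_sum]
    exact Finset.sum_congr rfl fun i _ => by ring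

private lemma lt_set_eq (n : ℕ) (c : (Fin n → ℤ) → ℝ) (α β : Fin n → ℤ) :
    {x : Fin n → ℝ | tropVal n c β x < tropVal n c α x} =
      {x : Fin n → ℝ | (∑ i, x i * ((β i : ℝ) - (α i : ℝ))) < c α - c β} := by
  ext x
  simp only [Set.mem_setOf_eq, tropVal, mul_sub, Finset.sum_sub_distrib]
  constructor <;> intro h <;> linarith

theorem stmt2 (n : ℕ) (hn : 1 ≤ n) (M : Finset (Fin n → ℤ)) (hM : M.Nonempty)
    (c : (Fin n → ℤ) → ℝ)
    (U : (Fin n → ℤ) → Set (Fin n → ℝ))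
    (hU : ∀ α, U α = {x | ∀ β ∈ M, β ≠ α → tropVal n c β x < tropVal n c α x}) :
    -- (i) each `U α` is open and convex
    (∀ α ∈ M, IsOpen (U α) ∧ Convex ℝ (U α)) ∧
    -- (ii) the sets `U α` are pairwise disjoint ...
    (∀ α ∈ M, ∀ β ∈ M, α ≠ β → Disjoint (U α) (U β)) ∧
    -- ... and the nonempty ones are exactly the connected components of the complement of `T`
    (∀ α ∈ M, ∀ x ∈ U α, connectedComponentIn (tropHypersurface n M c)ᶜ x = U α) ∧
    (∀ x ∈ (tropHypersurface n M c)ᶜ, ∃ α ∈ M,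
      connectedComponentIn (tropHypersurface n M c)ᶜ x = U α) ∧
    -- (iii) if `U α` is nonempty and unbounded then `α` lies on the frontier of `conv M`
    (∀ α ∈ M, (U α).Nonempty → ¬ Bornology.IsBounded (U α) →
      (fun i => (α i : ℝ)) ∈
        frontier (convexHull ℝ ((fun (β : Fin n → ℤ) (i : Fin n) => (β i : ℝ)) '' ↑M))) := by
  -- rewrite `U α` as a finite intersection of open half-spaces
  have hUeq : ∀ α, U α = ⋂ β ∈ M.erase α,
      {x : Fin n → ℝ | tropVal n c β x < tropVal n c α x} := by
    intro α
    rw [hU]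
    ext x
    simp only [Set.mem_setOf_eq, Set.mem_iInter, Finset.mem_erase]
    constructor
    · rintro h β ⟨hne, hβ⟩; exact h β hβ hne
    · intro h β hβ hne; exact h β ⟨hne, hβ⟩
  have hopen : ∀ α, IsOpen (U α) := by
    intro α
    rw [hUeq α]
    refine isOpen_biInter_finset fun β _ => ?_
    rw [lt_set_eq]
    exact isOpen_lt (by fun_prop) continuous_const
  have hconv : ∀ α, Convex ℝ (U α) := by
    intro α
    rw [hUeq α]
    refine convex_iInter fun β => convex_iInter fun _ => ?_
    rw [lt_set_eq]
    exact convex_halfSpace_lt (pairing_linear n _) _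
  have hdisj : ∀ α ∈ M, ∀ β ∈ M, α ≠ β → Disjoint (U α) (U β) := by
    intro α hα β hβ hne
    rw [Set.disjoint_left]
    intro x hxα hxβ
    rw [hU] at hxα hxβ
    have h1 := hxα β hβ (Ne.symm hne)
    have h2 := hxβ α hα hne
    linarith
  -- every `U α` avoids the tropical hypersurface
  have hUsub : ∀ α ∈ M, U α ⊆ (tropHypersurface n M c)ᶜ := by
    intro α hα x hx hxT
    rw [hU] at hx
    obtain ⟨γ, hγ, δ, hδ, hne, heq, hmax⟩ := hxT
    rcases ne_or_eq γ α with h | rfl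
    · have := hx γ hγ h
      have := hmax α hα
      linarith
    · have := hx δ hδ (Ne.symm hne)
      linarith
  -- every point off the hypersurface lies in some `U α`
  have hcover : ∀ x ∈ (tropHypersurface n M c)ᶜ, ∃ α ∈ M, x ∈ U α := by
    intro x hx
    obtain ⟨α, hα, hmax⟩ := M.exists_max_image (fun β => tropVal n c β x) hM
    refine ⟨α, hα, ?_⟩
    rw [hU]
    intro β hβ hne
    rcases lt_or_eq_of_le (hmax β hβ) with h | h
    · exact h
    · exfalso
      exact hx ⟨α, hα, β, hβ, Ne.symm hne, h.symm, hmax⟩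
  have hcomp : ∀ α ∈ M, ∀ x ∈ U α,
      connectedComponentIn (tropHypersurface n M c)ᶜ x = U α := by
    intro α hα x hx
    apply Set.Subset.antisymm
    · -- the component is contained in `U α`
      set V : Set (Fin n → ℝ) := ⋃ β ∈ M.erase α, U β with hV
      have hVopen : IsOpen V := isOpen_biUnion fun β _ => hopen β
      have hdUV : Disjoint (U α) V := by
        rw [Set.disjoint_left]
        intro y hy hyV
        obtain ⟨β, hβ, hyβ⟩ := Set.mem_iUnion₂.mp hyV
        rw [Finset.mem_erase] at hβ
        exact Set.disjoint_left.mp (hdisj α hα β hβ.2 (Ne.symm hβ.1)) hy hyβ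
      have hsub2 : connectedComponentIn (tropHypersurface n M c)ᶜ x ⊆ U α ∪ V := by
        intro y hy
        have hyS := connectedComponentIn_subset (tropHypersurface n M c)ᶜ x hy
        obtain ⟨β, hβ, hyβ⟩ := hcover y hyS
        rcases eq_or_ne β α with rfl | hne
        · exact Or.inl hyβ
        · exact Or.inr (Set.mem_biUnion (Finset.mem_erase.mpr ⟨hne, hβ⟩) hyβ)
      refine (isPreconnected_connectedComponentIn).subset_left_of_subset_union
        (hopen α) hVopen hdUV hsub2 ⟨x, mem_connectedComponentIn (hUsub α hα hx), hx⟩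
    · exact ((hconv α).isPreconnected).subset_connectedComponentIn hx (hUsub α hα)
  refine ⟨fun α _ => ⟨hopen α, hconv α⟩, hdisj, hcomp, ?_, ?_⟩
  · intro x hx
    obtain ⟨α, hα, hxα⟩ := hcover x hx
    exact ⟨α, hα, hcomp α hα x hxα⟩
  · -- part (iii)
    intro α hα _ hub
    set αr : Fin n → ℝ := fun i => (α i : ℝ) with hαr
    have hin : αr ∈ closure (convexHull ℝ ((fun (β : Fin n → ℤ) (i : Fin n) => (β i : ℝ)) '' ↑M)) :=
      subset_closure (subset_convexHull ℝ _ ⟨α, hα, rfl⟩)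
    have hnotint : αr ∉ interior (convexHull ℝ
        ((fun (β : Fin n → ℤ) (i : Fin n) => (β i : ℝ)) '' ↑M)) := by
      intro hint
      obtain ⟨ε, hε, hball⟩ := Metric.isOpen_iff.mp isOpen_interior αr hint
      have hballsub : Metric.ball αr ε ⊆
          convexHull ℝ ((fun (β : Fin n → ℤ) (i : Fin n) => (β i : ℝ)) '' ↑M) :=
        hball.trans interior_subset
      set D : ℝ := M.sup' hM (fun β => c α - c β) with hD
      have hD0 : 0 ≤ D := by
        have : c α - c α ≤ D := Finset.le_sup' (fun β => c α - c β) hα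
        linarith
      apply hub
      rw [isBounded_iff_forall_norm_le]
      refine ⟨2 * D / ε, fun x hx => ?_⟩
      rcases eq_or_ne x 0 with rfl | hx0
      · simp; positivity
      have hxpos : (0:ℝ) < ‖x‖ := norm_pos_iff.mpr hx0
      -- the linear functional `⟨x, ·⟩` is bounded on the convex hull
      have hbound : ∀ z ∈ convexHull ℝ ((fun (β : Fin n → ℤ) (i : Fin n) => (β i : ℝ)) '' ↑M),
          (∑ i, x i * z i) ≤ (∑ i, x i * αr i) + D := by
        have : convexHull ℝ ((fun (β : Fin n → ℤ) (i : Fin n) => (β i : ℝ)) '' ↑M) ⊆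
            {z : Fin n → ℝ | (∑ i, x i * z i) ≤ (∑ i, x i * αr i) + D} := by
          apply convexHull_min
          · rintro _ ⟨β, hβ, rfl⟩
            have hcd : c α - c β ≤ D := Finset.le_sup' (fun β => c α - c β) hβ
            rw [hU] at hx
            rcases eq_or_ne β α with rfl | hne
            · simp only [Set.mem_setOf_eq]; linarith
            · have := hx β hβ hne
              simp only [tropVal] at this
              simp only [Set.mem_setOf_eq, hαr]
              linarith
          · exact convex_halfSpace_le (pairing_linear' n x) _
        exact fun z hz => this hz
      -- the point `αr + (ε/2) x/‖x‖` lies in the ball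
      set y : Fin n → ℝ := αr + (ε / 2 / ‖x‖) • x with hy
      have hyball : y ∈ Metric.ball αr ε := by
        rw [Metric.mem_ball, dist_eq_norm]
        have : y - αr = (ε / 2 / ‖x‖) • x := by rw [hy]; abel
        rw [this, norm_smul, Real.norm_eq_abs, abs_of_pos (by positivity),
          div_mul_cancel₀ _ (ne_of_gt hxpos)]
        linarith
      have hyval := hbound y (hballsub hyball)
      -- compute `⟨x, y⟩`
      have hsumy : (∑ i, x i * y i) = (∑ i, x i * αr i) + (ε / 2 / ‖x‖) * ∑ i, x i * x i := by
        have h1 : ∀ i, x i * y i = x i * αr i + (ε / 2 / ‖x‖) * (x i * x i) := by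
          intro i
          rw [hy]
          simp only [Pi.add_apply, Pi.smul_apply, smul_eq_mul]
          ring
        rw [Finset.sum_congr rfl (fun i _ => h1 i), Finset.sum_add_distrib, ← Finset.mul_sum]
      -- `∑ x i ^ 2 ≥ ‖x‖ ^ 2` (sup norm)
      have hnormsq : ‖x‖ * ‖x‖ ≤ ∑ i, x i * x i := by
        have hs0 : (0:ℝ) ≤ ∑ i, x i * x i := Finset.sum_nonneg fun i _ => mul_self_nonneg _
        have h1 : ‖x‖ ≤ Real.sqrt (∑ i, x i * x i) := by
          rw [pi_norm_le_iff_of_nonneg (Real.sqrt_nonneg _)]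
          intro i
          rw [Real.norm_eq_abs, ← Real.sqrt_mul_self_eq_abs]
          exact Real.sqrt_le_sqrt (Finset.single_le_sum
            (fun j _ => mul_self_nonneg (x j)) (Finset.mem_univ i))
        calc ‖x‖ * ‖x‖ ≤ Real.sqrt (∑ i, x i * x i) * Real.sqrt (∑ i, x i * x i) :=
              mul_le_mul h1 h1 (norm_nonneg x) (Real.sqrt_nonneg _)
          _ = ∑ i, x i * x i := Real.mul_self_sqrt hs0
      -- conclude `‖x‖ ≤ 2 D / ε`
      have hkey : (ε / 2 / ‖x‖) * (‖x‖ * ‖x‖) ≤ D := by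
        have h2 : (ε / 2 / ‖x‖) * (‖x‖ * ‖x‖) ≤ (ε / 2 / ‖x‖) * ∑ i, x i * x i :=
          mul_le_mul_of_nonneg_left hnormsq (by positivity)
        linarith [hsumy ▸ hyval]
      have heq2 : (ε / 2 / ‖x‖) * (‖x‖ * ‖x‖) = (ε / 2) * ‖x‖ := by
        field_simp
      rw [le_div_iff₀ hε]
      nlinarith [heq2 ▸ hkey]
    exact ⟨hin, hnotint⟩
end

section
/- Let n ≥ 1, let A ⊆ ℝⁿ be a closed set, and let L ⊆ ℝⁿ be a line such that L ∩ ∂A is finite and every point of L ∩ ∂A lies in the closure of L ∖ A, where ∂A denotes the topological frontier of A in ℝⁿ. Then L ∩ A has finitely many connected components, and the cardinality of L ∩ ∂A is at most 2 times the number of connected components of L ∩ A. -/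
/-!
Parametrising the line by the closed embedding `φ t = u + t • v` reduces everything to the closed
set `S = φ ⁻¹' A ⊆ ℝ`: components of `L ∩ A` are images of components of `S`, and the
transversality hypothesis makes `L ∩ ∂A` the image of `∂S`. In `ℝ`, a component of `S` is an
interval, so at most its two endpoints lie on `∂S`; and a component missing `∂S` would be clopen,
so unless `S = ℝ` every component meets the finite set `∂S`.
-/

open Set Topology

variable {X Y : Type*} [TopologicalSpace X] [TopologicalSpace Y]

def connectedComponentsIn (S : Set X) : Set (Set X) :=
  {C | ∃ x ∈ S, C = connectedComponentIn S x}

theorem connectedComponentIn_mem_connectedComponentsIn {S : Set X} {x : X} (hx : x ∈ S) :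
    connectedComponentIn S x ∈ connectedComponentsIn S :=
  ⟨x, hx, rfl⟩

theorem IsClosed.connectedComponentIn {S : Set X} (hS : IsClosed S) (x : X) :
    IsClosed (connectedComponentIn S x) := by
  by_cases hx : x ∈ S
  · rw [connectedComponentIn_eq_image hx]
    exact hS.isClosedEmbedding_subtypeVal.isClosedMap _ isClosed_connectedComponent
  · rw [connectedComponentIn_eq_empty hx]
    exact isClosed_empty

theorem connectedComponentIn_eq_univ_of_disjoint_frontier [LocallyConnectedSpace X]
    [ConnectedSpace X] {S : Set X} (hS : IsClosed S) {x : X} (hx : x ∈ S)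
    (hdisj : Disjoint (connectedComponentIn S x) (frontier S)) :
    connectedComponentIn S x = univ := by
  have hint : connectedComponentIn S x ⊆ interior S := fun y hy ↦ by
    by_contra hyi
    exact hdisj.notMem_of_mem_left hy
      (hS.frontier_eq ▸ ⟨connectedComponentIn_subset S x hy, hyi⟩)
  have heq : connectedComponentIn (interior S) x = connectedComponentIn S x :=
    (connectedComponentIn_mono x interior_subset).antisymm
      (isPreconnected_connectedComponentIn.subset_connectedComponentIn
        (mem_connectedComponentIn hx) hint)
  refine IsClopen.eq_univ ⟨hS.connectedComponentIn x, ?_⟩ ⟨x, mem_connectedComponentIn hx⟩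
  exact heq ▸ isOpen_interior.connectedComponentIn

theorem connectedComponentsIn_subset_insert_univ [LocallyConnectedSpace X] [ConnectedSpace X]
    {S : Set X} (hS : IsClosed S) :
    connectedComponentsIn S ⊆ insert univ (connectedComponentIn S '' frontier S) := by
  rintro C ⟨x, hx, rfl⟩
  by_cases hdisj : Disjoint (connectedComponentIn S x) (frontier S)
  · exact .inl (connectedComponentIn_eq_univ_of_disjoint_frontier hS hx hdisj)
  · obtain ⟨y, hyC, hyS⟩ := not_disjoint_iff.mp hdisj
    exact .inr ⟨y, hyS, (connectedComponentIn_eq hyC).symm⟩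

theorem finite_connectedComponentsIn_of_finite_frontier [LocallyConnectedSpace X]
    [ConnectedSpace X] {S : Set X} (hS : IsClosed S) (hfin : (frontier S).Finite) :
    (connectedComponentsIn S).Finite :=
  ((hfin.image _).insert univ).subset (connectedComponentsIn_subset_insert_univ hS)

theorem Set.ncard_le_two_of_forall_not_lt_lt {α : Type*} [LinearOrder α] {P : Set α}
    (hP : P.Finite) (h : ∀ a ∈ P, ∀ b ∈ P, ∀ c ∈ P, a < b → ¬ b < c) : P.ncard ≤ 2 := by
  by_contra! hlt
  obtain ⟨a, ha, b, hb, c, hc, hab, hac, hbc⟩ := (two_lt_ncard hP).mp hlt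
  rcases hab.lt_or_gt with hab | hab <;> rcases hac.lt_or_gt with hac | hac <;>
    rcases hbc.lt_or_gt with hbc | hbc
  all_goals first
    | exact h a ha b hb c hc ‹_› ‹_› | exact h a ha c hc b hb ‹_› ‹_›
    | exact h b hb a ha c hc ‹_› ‹_› | exact h b hb c hc a ha ‹_› ‹_›
    | exact h c hc a ha b hb ‹_› ‹_› | exact h c hc b hb a ha ‹_› ‹_›

theorem Set.ncard_le_mul_ncard_image {α β : Type*} {s : Set α} (hs : s.Finite) (f : α → β)
    (n : ℕ) (hn : ∀ b ∈ f '' s, {a ∈ s | f a = b}.ncard ≤ n) : s.ncard ≤ n * (f '' s).ncard := by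
  classical
  lift s to Finset α using hs
  rw [← Finset.coe_image] at hn ⊢
  simp only [ncard_coe_finset]
  refine Finset.card_le_mul_card_image s n fun b hb ↦ ?_
  simpa [← Finset.coe_filter] using hn b hb

section LinearOrder

variable {α : Type*} [LinearOrder α] [TopologicalSpace α] [OrderClosedTopology α]

theorem mem_interior_of_lt_of_lt_of_mem_connectedComponentIn {S : Set α} {x a b c : α}
    (ha : a ∈ connectedComponentIn S x) (hc : c ∈ connectedComponentIn S x)
    (hab : a < b) (hbc : b < c) : b ∈ interior S := by
  have hIoo : Ioo a c ⊆ S := Ioo_subset_Icc_self.trans <|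
    (isPreconnected_connectedComponentIn.ordConnected.out ha hc).trans
      (connectedComponentIn_subset S x)
  exact interior_maximal hIoo isOpen_Ioo ⟨hab, hbc⟩

theorem ncard_connectedComponentIn_inter_frontier_le_two {S : Set α}
    (hfin : (frontier S).Finite) (x : α) : (connectedComponentIn S x ∩ frontier S).ncard ≤ 2 :=
  ncard_le_two_of_forall_not_lt_lt (hfin.subset inter_subset_right)
    fun _a ha _b hb _c hc hab hbc ↦
      hb.2.2 (mem_interior_of_lt_of_lt_of_mem_connectedComponentIn ha.1 hc.1 hab hbc)

theorem ncard_frontier_le_two_mul_ncard_connectedComponentsIn [LocallyConnectedSpace α]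
    [ConnectedSpace α] {S : Set α} (hS : IsClosed S) (hfin : (frontier S).Finite) :
    (frontier S).ncard ≤ 2 * (connectedComponentsIn S).ncard := by
  have hfibre : ∀ C ∈ connectedComponentIn S '' frontier S,
      {y ∈ frontier S | connectedComponentIn S y = C}.ncard ≤ 2 := by
    rintro _ ⟨x, -, rfl⟩
    have hsub : {y ∈ frontier S | connectedComponentIn S y = connectedComponentIn S x} ⊆
        connectedComponentIn S x ∩ frontier S := fun y hy ↦
      ⟨hy.2 ▸ mem_connectedComponentIn (hS.frontier_subset hy.1), hy.1⟩
    exact (ncard_le_ncard hsub (hfin.subset inter_subset_right)).trans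
      (ncard_connectedComponentIn_inter_frontier_le_two hfin x)
  calc (frontier S).ncard ≤ 2 * (connectedComponentIn S '' frontier S).ncard :=
        ncard_le_mul_ncard_image hfin _ 2 hfibre
    _ ≤ 2 * (connectedComponentsIn S).ncard := by
      gcongr
      · exact finite_connectedComponentsIn_of_finite_frontier hS hfin
      · rintro _ ⟨x, hx, rfl⟩
        exact connectedComponentIn_mem_connectedComponentsIn (hS.frontier_subset hx)

end LinearOrder

theorem Topology.IsEmbedding.image_connectedComponentIn {f : Y → X} (hf : IsEmbedding f)
    {s : Set Y} {y : Y} (hy : y ∈ s) :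
    f '' connectedComponentIn s y = connectedComponentIn (f '' s) (f y) := by
  refine (hf.continuous.continuousOn.image_connectedComponentIn_subset hy).antisymm ?_
  set T := connectedComponentIn (f '' s) (f y)
  have hTs : T ⊆ f '' s := connectedComponentIn_subset _ _
  have hT : f '' (f ⁻¹' T) = T := image_preimage_eq_of_subset (hTs.trans (image_subset_range _ _))
  have hpre : IsPreconnected (f ⁻¹' T) := by
    rw [← hf.isInducing.isPreconnected_image, hT]
    exact isPreconnected_connectedComponentIn
  have hsub : f ⁻¹' T ⊆ s := fun z hz ↦ by
    obtain ⟨w, hw, hwz⟩ := hTs hz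
    rwa [← hf.injective hwz]
  calc T = f '' (f ⁻¹' T) := hT.symm
    _ ⊆ f '' connectedComponentIn s y :=
      image_mono <| hpre.subset_connectedComponentIn
        (mem_connectedComponentIn (mem_image_of_mem f hy)) hsub

theorem Topology.IsEmbedding.connectedComponentsIn_image {f : Y → X} (hf : IsEmbedding f)
    (s : Set Y) : connectedComponentsIn (f '' s) = image f '' connectedComponentsIn s := by
  ext C
  constructor
  · rintro ⟨_, ⟨y, hy, rfl⟩, rfl⟩
    exact ⟨_, connectedComponentIn_mem_connectedComponentsIn hy, hf.image_connectedComponentIn hy⟩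
  · rintro ⟨_, ⟨y, hy, rfl⟩, rfl⟩
    exact ⟨f y, mem_image_of_mem f hy, hf.image_connectedComponentIn hy⟩

theorem Topology.IsClosedEmbedding.range_inter_frontier {f : Y → X} (hf : IsClosedEmbedding f)
    {A : Set X} (hA : IsClosed A)
    (htrans : ∀ x ∈ range f ∩ frontier A, x ∈ closure (range f \ A)) :
    range f ∩ frontier A = f '' frontier (f ⁻¹' A) := by
  refine subset_antisymm (fun x hx ↦ ?_) ?_
  · obtain ⟨y, hy, rfl⟩ : x ∈ f '' closure (f ⁻¹' A)ᶜ := by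
      rw [← hf.closure_image_eq, image_compl_preimage]
      exact htrans x hx
    refine ⟨y, ?_, rfl⟩
    rw [frontier_eq_closure_inter_closure]
    exact ⟨subset_closure (hA.frontier_subset hx.2), hy⟩
  · rintro _ ⟨y, hy, rfl⟩
    exact ⟨mem_range_self y, hf.continuous.frontier_preimage_subset A hy⟩

theorem isClosedEmbedding_const_add_smul {E : Type*} [NormedAddCommGroup E] [NormedSpace ℝ E]
    (u : E) {v : E} (hv : v ≠ 0) : IsClosedEmbedding fun t : ℝ ↦ u + t • v :=
  (Homeomorph.addLeft u).isClosedEmbedding.comp (isClosedEmbedding_smul_left hv)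

theorem stmt4_general (n : ℕ) (A : Set (Fin n → ℝ)) (hA : IsClosed A)
    (u v : Fin n → ℝ) (hv : v ≠ 0)
    (L : Set (Fin n → ℝ)) (hL : L = Set.range fun t : ℝ => u + t • v)
    (hfin : (L ∩ frontier A).Finite)
    (htrans : ∀ x ∈ L ∩ frontier A, x ∈ closure (L \ A)) :
    {C : Set (Fin n → ℝ) | ∃ x ∈ L ∩ A, C = connectedComponentIn (L ∩ A) x}.Finite ∧
    (L ∩ frontier A).ncard ≤
      2 * {C : Set (Fin n → ℝ) | ∃ x ∈ L ∩ A, C = connectedComponentIn (L ∩ A) x}.ncard := by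
  have hφ := isClosedEmbedding_const_add_smul u hv
  set φ : ℝ → Fin n → ℝ := fun t ↦ u + t • v
  subst hL
  set S := φ ⁻¹' A
  have hcomp : connectedComponentsIn (range φ ∩ A) = image φ '' connectedComponentsIn S := by
    rw [← image_preimage_eq_range_inter]
    exact hφ.isEmbedding.connectedComponentsIn_image S
  have hfr : range φ ∩ frontier A = φ '' frontier S := hφ.range_inter_frontier hA htrans
  have hSfin : (frontier S).Finite := (finite_image_iff hφ.injective.injOn).mp (hfr ▸ hfin)
  have hS : IsClosed S := hA.preimage hφ.continuous
  change (connectedComponentsIn _).Finite ∧ _ ≤ 2 * (connectedComponentsIn _).ncard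
  rw [hcomp, hfr, ncard_image_of_injective _ hφ.injective,
    ncard_image_of_injective _ (image_injective.mpr hφ.injective)]
  exact ⟨(finite_connectedComponentsIn_of_finite_frontier hS hSfin).image _,
    ncard_frontier_le_two_mul_ncard_connectedComponentsIn hS hSfin⟩

theorem stmt4 (n : ℕ) (hn : 1 ≤ n) (A : Set (Fin n → ℝ)) (hA : IsClosed A)
    (u v : Fin n → ℝ) (hv : v ≠ 0)
    (L : Set (Fin n → ℝ)) (hL : L = Set.range fun t : ℝ => u + t • v)
    (hfin : (L ∩ frontier A).Finite)
    (htrans : ∀ x ∈ L ∩ frontier A, x ∈ closure (L \ A)) :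
    {C : Set (Fin n → ℝ) | ∃ x ∈ L ∩ A, C = connectedComponentIn (L ∩ A) x}.Finite ∧
    (L ∩ frontier A).ncard ≤
      2 * {C : Set (Fin n → ℝ) | ∃ x ∈ L ∩ A, C = connectedComponentIn (L ∩ A) x}.ncard :=
  stmt4_general n A hA u v hv L hL hfin htrans
end

section
/- Let n ≥ 1, let M ⊆ ℤⁿ be finite nonempty with convex hull Δ, let c : M → ℝ, and let T ⊆ ℝⁿ be the associated tropical hypersurface. Assume every connected component of ℝⁿ ∖ T is unbounded (this holds in particular when T is contractible). Then for every line L ⊆ ℝⁿ such that L ∩ T is finite, the cardinality of L ∩ T is at most #(M ∩ ∂Δ) − 1, where ∂Δ is the topological frontier of Δ in ℝⁿ. -/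
noncomputable def maxAt (n : ℕ) (M : Finset (Fin n → ℤ)) (hM : M.Nonempty)
    (c : (Fin n → ℤ) → ℝ) (x : Fin n → ℝ) : Fin n → ℤ :=
  (M.exists_max_image (fun α => tropVal n c α x) hM).choose

lemma maxAt_mem (n : ℕ) (M : Finset (Fin n → ℤ)) (hM : M.Nonempty)
    (c : (Fin n → ℤ) → ℝ) (x : Fin n → ℝ) : maxAt n M hM c x ∈ M :=
  (M.exists_max_image (fun α => tropVal n c α x) hM).choose_spec.1

lemma maxAt_le (n : ℕ) (M : Finset (Fin n → ℤ)) (hM : M.Nonempty)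
    (c : (Fin n → ℤ) → ℝ) (x : Fin n → ℝ) :
    ∀ γ ∈ M, tropVal n c γ x ≤ tropVal n c (maxAt n M hM c x) x :=
  (M.exists_max_image (fun α => tropVal n c α x) hM).choose_spec.2

lemma maxAt_strict (n : ℕ) (M : Finset (Fin n → ℤ)) (hM : M.Nonempty)
    (c : (Fin n → ℤ) → ℝ) (x : Fin n → ℝ) (hx : x ∉ tropHypersurface n M c) :
    ∀ β ∈ M, β ≠ maxAt n M hM c x → tropVal n c β x < tropVal n c (maxAt n M hM c x) x := by
  intro β hβ hne
  rcases lt_or_eq_of_le (maxAt_le n M hM c x β hβ) with h | h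
  · exact h
  · exact absurd ⟨maxAt n M hM c x, maxAt_mem n M hM c x, β, hβ, hne.symm, h.symm,
      maxAt_le n M hM c x⟩ hx

lemma affine_neg {a b r t r' : ℝ} (h1 : r < t) (h2 : t < r') (h3 : a*r+b < 0)
    (h4 : a*r'+b < 0) : a*t+b < 0 := by
  nlinarith [mul_neg_of_neg_of_pos h3 (sub_pos.2 h2), mul_neg_of_neg_of_pos h4 (sub_pos.2 h1)]

lemma tropVal_line (n : ℕ) (c : (Fin n → ℤ) → ℝ) (γ : Fin n → ℤ) (u v : Fin n → ℝ) (t : ℝ) :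
    tropVal n c γ (u + t • v)
      = t * (∑ i, v i * (γ i : ℝ)) + ((∑ i, u i * (γ i : ℝ)) + c γ) := by
  have : ∀ i, (u i + t * v i) * (γ i : ℝ) = u i * (γ i : ℝ) + t * (v i * (γ i : ℝ)) := by
    intro i; ring
  simp only [tropVal, Pi.add_apply, Pi.smul_apply, smul_eq_mul, this,
    Finset.sum_add_distrib, Finset.mul_sum]
  ring

lemma tropVal_continuous (n : ℕ) (c : (Fin n → ℤ) → ℝ) (γ : Fin n → ℤ) :
    Continuous (fun y : Fin n → ℝ => tropVal n c γ y) := by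
  unfold tropVal
  exact (continuous_finset_sum Finset.univ
    (fun i _ => (continuous_apply i).mul continuous_const)).add continuous_const

lemma maxAt_frontier (n : ℕ) (M : Finset (Fin n → ℤ)) (hM : M.Nonempty)
    (c : (Fin n → ℤ) → ℝ) (x : Fin n → ℝ) (hx : x ∉ tropHypersurface n M c)
    (hunb : ¬ Bornology.IsBounded (connectedComponentIn (tropHypersurface n M c)ᶜ x)) :
    (fun i => ((maxAt n M hM c x) i : ℝ)) ∈
      frontier (convexHull ℝ ((fun (β : Fin n → ℤ) (i : Fin n) => (β i : ℝ)) '' ↑M)) := by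
  classical
  set T := tropHypersurface n M c with hT
  set α := maxAt n M hM c x with hα
  have hαM : α ∈ M := maxAt_mem n M hM c x
  -- the open region where α is the strict maximizer
  set R : (Fin n → ℤ) → Set (Fin n → ℝ) := fun δ =>
    {y | ∀ β ∈ M, β ≠ δ → tropVal n c β y < tropVal n c δ y} with hR
  have hRopen : ∀ δ, IsOpen (R δ) := by
    intro δ
    have : R δ = ⋂ β ∈ M.erase δ, {y | tropVal n c β y < tropVal n c δ y} := by
      ext y
      simp only [hR, Set.mem_setOf_eq, Set.mem_iInter, Finset.mem_erase]
      constructor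
      · intro h β ⟨h1, h2⟩; exact h β h2 h1
      · intro h β h1 h2; exact h β ⟨h2, h1⟩
    rw [this]
    exact isOpen_biInter_finset fun β _ =>
      isOpen_lt (tropVal_continuous n c β) (tropVal_continuous n c δ)
  have hRmem : ∀ y ∉ T, y ∈ R (maxAt n M hM c y) := fun y hy => maxAt_strict n M hM c y hy
  have hRdisj : ∀ δ δ', δ ∈ M → δ' ∈ M → δ ≠ δ' → Disjoint (R δ) (R δ') := by
    intro δ δ' h1 h2 hne
    rw [Set.disjoint_left]
    intro y hy hy'
    exact absurd (hy δ' h2 hne.symm) (not_lt.2 (le_of_lt (hy' δ h1 hne)))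
  have hRsub : ∀ δ ∈ M, R δ ⊆ Tᶜ := by
    intro δ _ y hy hyT
    obtain ⟨γ, hγ, γ', hγ', hne, heq, hmax⟩ := hyT
    by_cases hδγ : γ = δ
    · subst hδγ
      exact absurd heq (ne_of_gt (hy γ' hγ' (Ne.symm hne)))
    · exact absurd (hmax δ (by exact ‹δ ∈ M›)) (not_le.2 (hy γ hγ hδγ))
  -- the connected component of x is contained in R α
  have hxT : x ∈ Tᶜ := hx
  have hcomp : connectedComponentIn Tᶜ x ⊆ R α := by
    set V : Set (Fin n → ℝ) := ⋃ δ ∈ ((M.erase α : Finset _) : Set (Fin n → ℤ)), R δ with hV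
    have hVopen : IsOpen V := isOpen_biUnion (fun δ _ => hRopen δ)
    have hdisj : Disjoint (R α) V := by
      rw [Set.disjoint_left]
      intro y hy hy'
      simp only [hV, Set.mem_iUnion, Finset.mem_coe, Finset.mem_erase] at hy'
      obtain ⟨δ, ⟨hδne, hδM⟩, hyδ⟩ := hy'
      exact Set.disjoint_left.1 (hRdisj α δ hαM hδM (Ne.symm hδne)) hy hyδ
    have hsub : Tᶜ ⊆ R α ∪ V := by
      intro y hy
      by_cases hcase : maxAt n M hM c y = α
      · exact Set.mem_union_left _ (hcase ▸ hRmem y hy)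
      · refine Set.mem_union_right _ ?_
        simp only [hV, Set.mem_iUnion, Finset.mem_coe, Finset.mem_erase]
        exact ⟨maxAt n M hM c y, ⟨hcase, maxAt_mem n M hM c y⟩, hRmem y hy⟩
    exact IsPreconnected.subset_left_of_subset_union (hRopen α) hVopen hdisj
      ((connectedComponentIn_subset Tᶜ x).trans hsub)
      ⟨x, mem_connectedComponentIn hxT, hRmem x hx⟩
      isPreconnected_connectedComponentIn
  -- hence R α is unbounded
  have hRunb : ¬ Bornology.IsBounded (R α) := fun h => hunb (h.subset hcomp)
  -- get a direction w with ⟨w, β⟩ ≤ ⟨w, α⟩ for all β ∈ M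
  have hbig : ∀ k : ℕ, ∃ y, y ∈ R α ∧ (k : ℝ) < ‖y‖ := by
    intro k
    by_contra h
    push_neg at h
    exact hRunb (isBounded_iff_forall_norm_le.2 ⟨k, h⟩)
  choose y hyR hynorm using hbig
  have hypos : ∀ k, 0 < ‖y k‖ := fun k => lt_of_le_of_lt (Nat.cast_nonneg k) (hynorm k)
  set w : ℕ → (Fin n → ℝ) := fun k => ‖y k‖⁻¹ • y k with hw
  have hwsphere : ∀ k, w k ∈ Metric.sphere (0 : Fin n → ℝ) 1 := by
    intro k
    simp only [mem_sphere_zero_iff_norm, hw, norm_smul, norm_inv, norm_norm]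
    exact inv_mul_cancel₀ (ne_of_gt (hypos k))
  obtain ⟨wl, hwls, ψ, hψ, hψtend⟩ :=
    (isCompact_sphere (0 : Fin n → ℝ) 1).tendsto_subseq hwsphere
  have hwlnorm : ‖wl‖ = 1 := mem_sphere_zero_iff_norm.1 hwls
  have hwlne : wl ≠ 0 := by
    intro h; rw [h, norm_zero] at hwlnorm; exact one_ne_zero hwlnorm.symm
  -- the key limiting inequalities
  have hkey : ∀ β ∈ M, (∑ i, wl i * (β i : ℝ)) ≤ ∑ i, wl i * (α i : ℝ) := by
    intro β hβ
    by_cases hβα : β = α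
    · subst hβα; exact le_refl _
    -- linear functional
    set f : (Fin n → ℝ) → ℝ := fun z => ∑ i, z i * ((β i : ℝ) - (α i : ℝ)) with hf
    have hfc : Continuous f :=
      continuous_finset_sum Finset.univ (fun i _ => (continuous_apply i).mul continuous_const)
    have hineq : ∀ k, f (y k) < c α - c β := by
      intro k
      have h1 := hyR k β hβ hβα
      simp only [tropVal] at h1
      have h2 : (∑ i, (y k) i * ((β i : ℝ) - (α i : ℝ)))
          = (∑ i, (y k) i * (β i : ℝ)) - ∑ i, (y k) i * (α i : ℝ) := by
        simp [mul_sub, Finset.sum_sub_distrib]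
      simp only [hf]
      rw [h2]; linarith
    have hineq2 : ∀ k, f (w (ψ k)) ≤ (c α - c β) / ‖y (ψ k)‖ := by
      intro k
      have hpos := hypos (ψ k)
      have : f (w (ψ k)) = ‖y (ψ k)‖⁻¹ * f (y (ψ k)) := by
        simp only [hf, hw, Pi.smul_apply, smul_eq_mul, Finset.mul_sum, mul_assoc]
      rw [this, div_eq_inv_mul]
      exact mul_le_mul_of_nonneg_left (le_of_lt (hineq (ψ k))) (le_of_lt (inv_pos.2 hpos))
    have hlim1 : Filter.Tendsto (fun k => f (w (ψ k))) Filter.atTop (nhds (f wl)) :=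
      (hfc.tendsto wl).comp hψtend
    have hlim2 : Filter.Tendsto (fun k => (c α - c β) / ‖y (ψ k)‖) Filter.atTop (nhds 0) := by
      apply Filter.Tendsto.div_atTop tendsto_const_nhds
      apply Filter.tendsto_atTop_mono (fun k => le_of_lt (hynorm (ψ k)))
      exact (tendsto_natCast_atTop_atTop (R := ℝ)).comp hψ.tendsto_atTop
    have hfwl : f wl ≤ 0 := le_of_tendsto_of_tendsto' hlim1 hlim2 hineq2
    have : (∑ i, wl i * ((β i : ℝ) - (α i : ℝ)))
        = (∑ i, wl i * (β i : ℝ)) - ∑ i, wl i * (α i : ℝ) := by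
      simp [mul_sub, Finset.sum_sub_distrib]
    simp only [hf] at hfwl
    rw [this] at hfwl; linarith
  -- conclude: α is on the frontier of the Newton polytope
  set ι : (Fin n → ℤ) → (Fin n → ℝ) := fun β i => (β i : ℝ) with hι
  set K := convexHull ℝ (ι '' (M : Set (Fin n → ℤ))) with hK
  have hαK : ι α ∈ K := subset_convexHull ℝ _ ⟨α, hαM, rfl⟩
  have hnotint : ι α ∉ interior K := by
    intro hint
    rw [mem_interior_iff_mem_nhds, Metric.mem_nhds_iff] at hint
    obtain ⟨ε, hε, hball⟩ := hint
    set g : (Fin n → ℝ) → ℝ := fun z => ∑ i, wl i * z i with hg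
    have hglin : IsLinearMap ℝ g := by
      constructor
      · intro p q; simp [hg, mul_add, Finset.sum_add_distrib]
      · intro a p
        simp only [hg, Pi.smul_apply, smul_eq_mul, Finset.mul_sum]
        congr 1; ext i; ring
    have hgK : ∀ z ∈ K, g z ≤ g (ι α) := by
      intro z hz
      have : K ⊆ {z | g z ≤ g (ι α)} := by
        apply convexHull_min _ (convex_halfSpace_le hglin _)
        rintro _ ⟨β, hβ, rfl⟩
        exact hkey β hβ
      exact this hz
    set z := ι α + (ε/2) • wl with hz
    have hzball : z ∈ Metric.ball (ι α) ε := by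
      simp only [hz, Metric.mem_ball, dist_eq_norm, add_sub_cancel_left, norm_smul,
        Real.norm_eq_abs, hwlnorm, mul_one, abs_of_pos (half_pos hε)]
      linarith
    have hzK := hgK z (hball hzball)
    have hsum : 0 < ∑ i, wl i * wl i := by
      have : ∃ i, wl i ≠ 0 := by
        by_contra h
        push_neg at h
        exact hwlne (funext h)
      obtain ⟨i, hi⟩ := this
      apply Finset.sum_pos' (fun j _ => mul_self_nonneg _)
      exact ⟨i, Finset.mem_univ i, mul_self_pos.2 hi⟩
    have : g z = g (ι α) + (ε/2) * ∑ i, wl i * wl i := by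
      simp only [hg, hz, Pi.add_apply, Pi.smul_apply, smul_eq_mul, mul_add,
        Finset.sum_add_distrib, Finset.mul_sum]
      congr 1
      apply Finset.sum_congr rfl
      intro i _; ring
    nlinarith [half_pos hε]
  exact ⟨subset_closure hαK, hnotint⟩

theorem stmt6 (n : ℕ) (hn : 1 ≤ n) (M : Finset (Fin n → ℤ)) (hM : M.Nonempty)
    (c : (Fin n → ℤ) → ℝ)
    -- every connected component of the complement of `T` is unbounded
    (hunb : ∀ x ∉ tropHypersurface n M c,
      ¬ Bornology.IsBounded (connectedComponentIn (tropHypersurface n M c)ᶜ x))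
    (u v : Fin n → ℝ) (hv : v ≠ 0)
    (L : Set (Fin n → ℝ)) (hL : L = Set.range fun t : ℝ => u + t • v)
    (hfin : (L ∩ tropHypersurface n M c).Finite) :
    (L ∩ tropHypersurface n M c).ncard ≤
      {α : Fin n → ℤ | α ∈ M ∧ (fun i => (α i : ℝ)) ∈
        frontier (convexHull ℝ ((fun (β : Fin n → ℤ) (i : Fin n) => (β i : ℝ)) '' ↑M))}.ncard
        - 1 := by
  classical
  set B := {α : Fin n → ℤ | α ∈ M ∧ (fun i => (α i : ℝ)) ∈
      frontier (convexHull ℝ ((fun (β : Fin n → ℤ) (i : Fin n) => (β i : ℝ)) '' ↑M))} with hB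
  set T := tropHypersurface n M c with hT
  set φ : ℝ → (Fin n → ℝ) := fun t => u + t • v with hφ
  have hφinj : Function.Injective φ := by
    obtain ⟨i, hi⟩ : ∃ i, v i ≠ 0 := by
      by_contra h; push_neg at h; exact hv (funext h)
    intro s s' h
    have h2 := congrFun h i
    simp only [hφ, Pi.add_apply, Pi.smul_apply, smul_eq_mul] at h2
    have h3 : s * v i = s' * v i := by linarith
    exact mul_right_cancel₀ hi h3
  set S : Set ℝ := φ ⁻¹' T with hS
  have hLT : L ∩ T = φ '' S := by
    rw [hL, hS, Set.image_preimage_eq_inter_range, Set.inter_comm]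
  have hSfin : S.Finite :=
    Set.Finite.of_finite_image (by rw [← hLT]; exact hfin) hφinj.injOn
  have hcard : (L ∩ T).ncard = S.ncard := by
    rw [hLT, Set.ncard_image_of_injective _ hφinj]
  rcases S.eq_empty_or_nonempty with hSe | hSne
  · rw [hcard, hSe, Set.ncard_empty]
    exact Nat.zero_le _
  set nxt : ℝ → ℝ := fun t =>
    if h : (S ∩ Set.Ioi t).Nonempty then (t + sInf (S ∩ Set.Ioi t)) / 2 else t + 1 with hnxt
  have hnxt_spec : ∀ t, t < nxt t ∧ nxt t ∉ S ∧ ∀ t' ∈ S, t < t' → nxt t < t' := by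
    intro t
    by_cases h : (S ∩ Set.Ioi t).Nonempty
    · have hfin' : (S ∩ Set.Ioi t).Finite := hSfin.subset Set.inter_subset_left
      have hmem := h.csInf_mem hfin'
      have htlt : t < sInf (S ∩ Set.Ioi t) := hmem.2
      have hle : ∀ t' ∈ S, t < t' → sInf (S ∩ Set.Ioi t) ≤ t' := fun t' h1 h2 =>
        csInf_le hfin'.bddBelow ⟨h1, h2⟩
      simp only [hnxt, dif_pos h]
      refine ⟨by linarith, ?_, fun t' h1 h2 => by have := hle t' h1 h2; linarith⟩
      intro hmem2
      have := hle _ hmem2 (by linarith)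
      linarith
    · simp only [hnxt, dif_neg h]
      refine ⟨by linarith, ?_, ?_⟩
      · intro hmem2; exact h ⟨t + 1, hmem2, by simp only [Set.mem_Ioi]; linarith⟩
      · intro t' h1 h2; exact absurd ⟨t', h1, h2⟩ h
  -- key lemma: the same strict maximizer cannot persist across a point of T on the line
  have key : ∀ r r' : ℝ, r < r' → ∀ (hr : φ r ∉ T) (hr' : φ r' ∉ T),
      maxAt n M hM c (φ r) = maxAt n M hM c (φ r') →
      ∀ t, r < t → t < r' → φ t ∉ T := by
    intro r r' hrr' hr hr' heq t h1 h2 htT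
    set α := maxAt n M hM c (φ r) with hα
    have hαM : α ∈ M := maxAt_mem n M hM c (φ r)
    obtain ⟨γ, hγ, δ, hδ, hne, heqv, hmax⟩ := htT
    obtain ⟨β, hβM, hβα, hβge⟩ :
        ∃ β ∈ M, β ≠ α ∧ tropVal n c α (φ t) ≤ tropVal n c β (φ t) := by
      by_cases hγα : γ = α
      · refine ⟨δ, hδ, fun hδα => hne (by rw [hγα, hδα]), ?_⟩
        rw [← heqv, hγα]
      · exact ⟨γ, hγ, hγα, hmax α hαM⟩
    have hc1 : tropVal n c β (φ r) < tropVal n c α (φ r) :=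
      maxAt_strict n M hM c (φ r) hr β hβM hβα
    have hc2 : tropVal n c β (φ r') < tropVal n c α (φ r') := by
      have := maxAt_strict n M hM c (φ r') hr' β hβM (by rw [← heq]; exact hβα)
      rwa [← heq] at this
    set a := (∑ i, v i * ((β i : ℝ))) - ∑ i, v i * ((α i : ℝ)) with ha
    set b := ((∑ i, u i * ((β i : ℝ))) + c β) - ((∑ i, u i * ((α i : ℝ))) + c α) with hb
    have hform : ∀ s : ℝ, tropVal n c β (φ s) - tropVal n c α (φ s) = a * s + b := by
      intro s
      simp only [hφ, tropVal_line, ha, hb]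
      ring
    have c1 : a * r + b < 0 := by have := hform r; linarith
    have c2 : a * r' + b < 0 := by have := hform r'; linarith
    have c3 : 0 ≤ a * t + b := by have := hform t; linarith
    linarith [affine_neg h1 h2 c1 c2]
  have hBfin : B.Finite := M.finite_toSet.subset (fun α hα => hα.1)
  set g : ℝ → (Fin n → ℤ) := fun t => maxAt n M hM c (φ (nxt t)) with hg
  have hnotT : ∀ t : ℝ, t ∉ S → φ t ∉ T := fun t ht => ht
  have hgB : ∀ t : ℝ, t ∉ S → maxAt n M hM c (φ t) ∈ B := by
    intro t ht
    have h1 : φ t ∉ T := hnotT t ht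
    exact ⟨maxAt_mem n M hM c (φ t), maxAt_frontier n M hM c (φ t) h1 (hunb (φ t) h1)⟩
  have hginj : Set.InjOn g S := by
    intro t1 h1 t2 h2 hgeq
    by_contra hne12
    rcases lt_or_gt_of_ne hne12 with hlt | hlt
    · exact key (nxt t1) (nxt t2)
        (lt_trans ((hnxt_spec t1).2.2 t2 h2 hlt) (hnxt_spec t2).1)
        (hnotT _ (hnxt_spec t1).2.1) (hnotT _ (hnxt_spec t2).2.1) hgeq t2
        ((hnxt_spec t1).2.2 t2 h2 hlt) (hnxt_spec t2).1 h2
    · exact key (nxt t2) (nxt t1)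
        (lt_trans ((hnxt_spec t2).2.2 t1 h1 hlt) (hnxt_spec t1).1)
        (hnotT _ (hnxt_spec t2).2.1) (hnotT _ (hnxt_spec t1).2.1) hgeq.symm t1
        ((hnxt_spec t2).2.2 t1 h1 hlt) (hnxt_spec t1).1 h1
  set m : ℝ := sInf S with hm
  have hmS : m ∈ S := hSne.csInf_mem hSfin
  have hmle : ∀ t ∈ S, m ≤ t := fun t ht => csInf_le hSfin.bddBelow ht
  have hm1S : m - 1 ∉ S := fun h => by have := hmle _ h; linarith
  set αm : Fin n → ℤ := maxAt n M hM c (φ (m - 1)) with hαm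
  have hαm_not : αm ∉ g '' S := by
    rintro ⟨t, ht, hteq⟩
    have h1 : m - 1 < t := by have := hmle t ht; linarith
    exact key (m - 1) (nxt t) (lt_trans h1 (hnxt_spec t).1)
      (hnotT _ hm1S) (hnotT _ (hnxt_spec t).2.1) hteq.symm t h1 (hnxt_spec t).1 ht
  have hsub : insert αm (g '' S) ⊆ B := by
    intro β hβ
    rcases Set.mem_insert_iff.1 hβ with rfl | ⟨t, ht, rfl⟩
    · exact hgB (m - 1) hm1S
    · exact hgB (nxt t) (hnxt_spec t).2.1
  have h1 : (insert αm (g '' S)).ncard = (g '' S).ncard + 1 :=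
    Set.ncard_insert_of_notMem hαm_not (hSfin.image g)
  have h2 : (g '' S).ncard = S.ncard := Set.ncard_image_of_injOn hginj
  have h3 := Set.ncard_le_ncard hsub hBfin
  rw [hcard]
  omega
end

section
/- Let n ≥ 1 and let P be a nonzero Laurent polynomial in n variables with real coefficients and support M ⊆ ℤⁿ. Let H_ℝ = {x ∈ (ℝ∖{0})ⁿ : P(x) = 0} and let A^ℝ = {(log|x₁|, …, log|xₙ|) : x ∈ H_ℝ} ⊆ ℝⁿ. Let N be the cardinality of the set of functions {α ↦ ε₁^{α₁}⋯εₙ^{αₙ} : ε ∈ {−1, 1}ⁿ} from M to {−1, 1} (so N = 2^{κ_M} in the notation of the paper). Then for every line L ⊆ ℝⁿ whose direction vector can be chosen in ℤⁿ and such that L ∩ A^ℝ is finite, the cardinality of L ∩ A^ℝ is at most N·(#M − 1). -/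
/-!
Write a point of `ℝⁿ` on the line as `u + t • w`. Its preimages under `Log` are the points
`(εᵢ e^{uᵢ + t wᵢ})ᵢ` with signs `ε`, and at such a point `P` equals the exponential sum
`∑_α P_α ε^α e^{⟨α, u⟩} e^{⟨α, w⟩ t}` in `t`, which depends on `ε` only through the sign pattern
`α ↦ ε^α`. So the intersection is the union, over the `N` sign patterns, of the zero sets of
exponential sums with at most `#M` terms. An exponential sum with `k` terms that is not identically
zero has at most `k - 1` real zeros: multiplying by `e^{-μ t}` for one of its frequencies `μ`
and differentiating kills a term, so by Rolle's theorem the count follows by induction on `k`.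
-/

/-- Evaluation of a real Laurent polynomial (given by its finitely supported coefficient
function) at a point of `ℝⁿ`. -/
noncomputable def realLaurentEval (n : ℕ) (P : (Fin n → ℤ) →₀ ℝ) (x : Fin n → ℝ) : ℝ :=
  ∑ α ∈ P.support, P α * ∏ i, x i ^ α i

open Real

theorem Set.encard_le_encard_add_one_of_interleaved {α : Type*} [LinearOrder α] {Z D : Set α}
    (h : ∀ x ∈ Z, ∀ y ∈ Z, x < y → ∃ z ∈ D, x < z ∧ z < y) :
    Z.encard ≤ D.encard + 1 := by
  obtain hD | hD := D.finite_or_infinite.symm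
  · simp [hD.encard_eq]
  by_contra! hlt
  obtain ⟨T, hTZ, hT⟩ := Set.exists_subset_encard_eq (Order.add_one_le_of_lt hlt)
  have hTfin : T.Finite :=
    Set.finite_of_encard_eq_coe (by rw [hT, hD.encard_eq_coe_toFinset_card]; rfl)
  have hcard : hTfin.toFinset.card ≤ hD.toFinset.card + 1 :=
    Finset.card_le_of_interleaved fun x hx y hy hxy _ => by
      simpa using h x (hTZ (by simpa using hx)) y (hTZ (by simpa using hy)) hxy
  rw [hTfin.encard_eq_coe_toFinset_card, hD.encard_eq_coe_toFinset_card] at hT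
  norm_cast at hT
  omega

theorem encard_zeros_le_encard_zeros_of_hasDerivAt {f f' : ℝ → ℝ}
    (hf : ∀ x, HasDerivAt f (f' x) x) :
    {x | f x = 0}.encard ≤ {x | f' x = 0}.encard + 1 :=
  Set.encard_le_encard_add_one_of_interleaved fun _ hx _ hy hxy =>
    let ⟨z, hz, hz'⟩ := exists_hasDerivAt_eq_zero hxy
      (fun t _ => (hf t).continuousAt.continuousWithinAt) (hx.trans hy.symm) fun t _ => hf t
    ⟨z, hz', hz⟩

theorem Set.ncard_biUnion_le_ncard_mul {ι α : Type*} {G : Set ι} (hG : G.Finite)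
    {Z : ι → Set α} {k : ℕ} (hZ : ∀ g ∈ G, (Z g).ncard ≤ k) :
    (⋃ g ∈ G, Z g).ncard ≤ G.ncard * k := by
  rw [← hG.coe_toFinset, Set.ncard_coe_finset]
  exact (Finset.set_ncard_biUnion_le _ _).trans
    (Finset.sum_le_card_nsmul _ _ _ fun g hg => hZ g (by simpa using hg))

noncomputable def expSum {ι : Type*} (s : Finset ι) (μ b : ι → ℝ) (t : ℝ) : ℝ :=
  ∑ i ∈ s, b i * exp (μ i * t)

section expSum

variable {ι : Type*} (s : Finset ι) (μ b : ι → ℝ)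

theorem expSum_sub_const (a t : ℝ) :
    expSum s (fun i => μ i - a) b t = exp (-(a * t)) * expSum s μ b t := by
  simp only [expSum, Finset.mul_sum]
  refine Finset.sum_congr rfl fun i _ => ?_
  rw [mul_left_comm, ← exp_add]
  ring_nf

theorem setOf_expSum_sub_const_eq_zero (a : ℝ) :
    {t | expSum s (fun i => μ i - a) b t = 0} = {t | expSum s μ b t = 0} := by
  ext t
  simp [expSum_sub_const, exp_ne_zero]

theorem hasDerivAt_expSum (t : ℝ) :
    HasDerivAt (expSum s μ b) (expSum s μ (fun i => b i * μ i) t) t := by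
  unfold expSum
  refine HasDerivAt.fun_sum fun i _ => ?_
  exact ((((hasDerivAt_id' t).const_mul (μ i)).exp).const_mul (b i)).congr_deriv (by ring)

theorem encard_zeros_expSum_add_one_le (h : ∃ t, expSum s μ b t ≠ 0) :
    {t | expSum s μ b t = 0}.encard + 1 ≤ s.card := by
  classical
  induction s using Finset.strongInduction generalizing b with
  | H s ih =>
  obtain ⟨i₀, hi₀⟩ : s.Nonempty := by
    by_contra! hs
    simp [hs, expSum] at h
  set a := μ i₀
  set b' : ι → ℝ := fun i => b i * (μ i - a)
  have hderiv : ∀ t, HasDerivAt (expSum s (fun i => μ i - a) b)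
      (exp (-(a * t)) * expSum (s.erase i₀) μ b' t) t := by
    intro t
    have herase : expSum (s.erase i₀) μ b' t = expSum s μ b' t :=
      Finset.sum_erase _ (by simp [b', a])
    rw [herase, ← expSum_sub_const]
    exact hasDerivAt_expSum s _ b t
  by_cases h' : ∃ t, expSum (s.erase i₀) μ b' t ≠ 0
  · have hrolle := encard_zeros_le_encard_zeros_of_hasDerivAt hderiv
    simp only [setOf_expSum_sub_const_eq_zero, mul_eq_zero, exp_ne_zero, false_or] at hrolle
    calc {t | expSum s μ b t = 0}.encard + 1
        ≤ {t | expSum (s.erase i₀) μ b' t = 0}.encard + 1 + 1 := by gcongr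
      _ ≤ ((s.erase i₀).card : ℕ∞) + 1 := by gcongr; exact ih _ (Finset.erase_ssubset hi₀) b' h'
      _ = s.card := by norm_cast; exact Finset.card_erase_add_one hi₀
  · push Not at h'
    have hconst := is_const_of_deriv_eq_zero (fun t => (hderiv t).differentiableAt)
      fun t => by simp [(hderiv t).deriv, h']
    obtain ⟨t₀, ht₀⟩ := h
    have hempty : {t | expSum s μ b t = 0} = ∅ := by
      rw [← setOf_expSum_sub_const_eq_zero s μ b a, Set.eq_empty_iff_forall_notMem]
      intro t (ht : expSum s _ b t = 0)
      rw [hconst t t₀, expSum_sub_const] at ht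
      simp [exp_ne_zero, ht₀] at ht
    simpa [hempty, Order.one_le_iff_pos] using ⟨i₀, hi₀⟩

theorem ncard_zeros_expSum_le (hfin : {t | expSum s μ b t = 0}.Finite) :
    {t | expSum s μ b t = 0}.ncard ≤ s.card - 1 := by
  obtain ⟨t, ht⟩ := hfin.infinite_compl.nonempty
  have := encard_zeros_expSum_add_one_le s μ b ⟨t, ht⟩
  rw [← hfin.cast_ncard_eq] at this
  norm_cast at this
  omega

end expSum

theorem mem_image_log_abs_iff {ι : Type*} (Q : (ι → ℝ) → Prop) (p : ι → ℝ) :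
    p ∈ (fun (x : ι → ℝ) (i : ι) => log |x i|) '' {x | (∀ i, x i ≠ 0) ∧ Q x} ↔
      ∃ ε : ι → ℝ, (∀ i, ε i = 1 ∨ ε i = -1) ∧ Q (fun i => ε i * exp (p i)) := by
  constructor
  · rintro ⟨x, ⟨hx0, hxQ⟩, rfl⟩
    refine ⟨fun i => SignType.sign (x i), fun i => ?_, ?_⟩
    · rcases (hx0 i).lt_or_gt with h | h <;> simp [h]
    · convert hxQ with i
      rw [exp_log (abs_pos.2 (hx0 i)), sign_mul_abs]
  · rintro ⟨ε, hε, hQ⟩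
    refine ⟨_, ⟨fun i => ?_, hQ⟩, funext fun i => ?_⟩
    · rcases hε i with h | h <;> simp [h, exp_ne_zero]
    · rcases hε i with h | h <;> simp [h]

section Laurent

variable {n : ℕ} (P : (Fin n → ℤ) →₀ ℝ)

def signPatterns : Set (P.support → ℝ) :=
  {g | ∃ ε : Fin n → ℝ, (∀ i, ε i = 1 ∨ ε i = -1) ∧ ∀ α, g α = ∏ i, ε i ^ (α.1 i)}

theorem signPatterns_finite : (signPatterns P).Finite := by
  have hsigns : {ε : Fin n → ℝ | ∀ i, ε i = 1 ∨ ε i = -1}.Finite :=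
    (Set.Finite.pi fun _ => ({1, -1} : Set ℝ).toFinite).subset fun ε hε i _ => hε i
  refine (hsigns.image fun ε (α : P.support) => ∏ i, ε i ^ (α.1 i)).subset ?_
  rintro g ⟨ε, hε, hg⟩
  exact ⟨ε, hε, funext fun α => (hg α).symm⟩

noncomputable def lineExpSum (u w : Fin n → ℝ) (g : P.support → ℝ) : ℝ → ℝ :=
  expSum Finset.univ (fun α : P.support => ∑ i, (α.1 i : ℝ) * w i)
    (fun α => P α * g α * exp (∑ i, (α.1 i : ℝ) * u i))

theorem ncard_zeros_lineExpSum_le (u w : Fin n → ℝ) (g : P.support → ℝ)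
    (hfin : {t | lineExpSum P u w g t = 0}.Finite) :
    {t | lineExpSum P u w g t = 0}.ncard ≤ P.support.card - 1 :=
  (ncard_zeros_expSum_le _ _ _ hfin).trans_eq (by simp)

theorem realLaurentEval_mul_exp_line (ε u w : Fin n → ℝ) (t : ℝ) :
    realLaurentEval n P (fun i => ε i * exp (u i + t * w i)) =
      lineExpSum P u w (fun α => ∏ i, ε i ^ (α.1 i)) t := by
  rw [realLaurentEval, lineExpSum, expSum, ← Finset.sum_coe_sort P.support]
  refine Finset.sum_congr rfl fun α _ => ?_
  have hexp : ∏ i, exp (u i + t * w i) ^ α.1 i =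
      exp (∑ i, (α.1 i : ℝ) * u i) * exp ((∑ i, (α.1 i : ℝ) * w i) * t) := by
    simp only [← rpow_intCast, ← exp_mul, ← exp_sum, ← exp_add, Finset.sum_mul,
      ← Finset.sum_add_distrib]
    exact congrArg exp (Finset.sum_congr rfl fun i _ => by ring)
  simp only [mul_zpow, Finset.prod_mul_distrib, hexp]
  ring

theorem preimage_line_amoeba (u w : Fin n → ℝ) :
    (fun t : ℝ => u + t • w) ⁻¹' ((fun (x : Fin n → ℝ) (i : Fin n) => log |x i|) ''
      {x | (∀ i, x i ≠ 0) ∧ realLaurentEval n P x = 0}) =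
      ⋃ g ∈ signPatterns P, {t | lineExpSum P u w g t = 0} := by
  ext t
  simp only [Set.mem_preimage, mem_image_log_abs_iff, Set.mem_iUnion₂, Set.mem_ofPred_eq,
    Pi.add_apply, Pi.smul_apply, smul_eq_mul, realLaurentEval_mul_exp_line]
  constructor
  · rintro ⟨ε, hε, hzero⟩
    exact ⟨_, ⟨ε, hε, fun α => rfl⟩, hzero⟩
  · rintro ⟨g, ⟨ε, hε, hg⟩, hzero⟩
    exact ⟨ε, hε, funext hg ▸ hzero⟩

end Laurent

theorem stmt9_general (n : ℕ) (P : (Fin n → ℤ) →₀ ℝ)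
    -- the real stratum of the amoeba: image of the real points of `{P = 0}` under `Log`
    (AR : Set (Fin n → ℝ))
    (hAR : AR = (fun (x : Fin n → ℝ) (i : Fin n) => Real.log |x i|) ''
      {x | (∀ i, x i ≠ 0) ∧ realLaurentEval n P x = 0})
    -- `N = 2 ^ κ_M` : the number of sign patterns `α ↦ ε ^ α` on the support of `P`
    (N : ℕ)
    (hN : N = Set.ncard {g : {α // α ∈ P.support} → ℝ |
      ∃ ε : Fin n → ℝ, (∀ i, ε i = 1 ∨ ε i = -1) ∧ ∀ α, g α = ∏ i, ε i ^ (α.1 i)})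
    -- a line whose direction vector can be chosen integral
    (u : Fin n → ℝ) (w : Fin n → ℤ) (hw : w ≠ 0)
    (L : Set (Fin n → ℝ))
    (hL : L = Set.range fun t : ℝ => u + t • fun i => (w i : ℝ))
    (hfin : (L ∩ AR).Finite) :
    (L ∩ AR).ncard ≤ N * (P.support.card - 1) := by
  set v : Fin n → ℝ := fun i => (w i : ℝ)
  have hv : v ≠ 0 := fun h => hw (funext fun i => by simpa [v] using congrFun h i)
  have hline : Function.Injective fun t : ℝ => u + t • v :=
    (add_right_injective u).comp (smul_left_injective ℝ hv)
  have hLAR : L ∩ AR = (fun t : ℝ => u + t • v) '' ⋃ g ∈ signPatterns P,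
      {t | lineExpSum P u v g t = 0} := by
    rw [← preimage_line_amoeba, Set.image_preimage_eq_range_inter, hL, hAR]
  rw [hLAR] at hfin ⊢
  have hzeros_fin := hfin.of_finite_image hline.injOn
  rw [Set.ncard_image_of_injective _ hline, hN]
  refine Set.ncard_biUnion_le_ncard_mul (signPatterns_finite P) fun g hg => ?_
  exact ncard_zeros_lineExpSum_le P u v g
    (hzeros_fin.subset (Set.subset_biUnion_of_mem (u := fun g => {t | lineExpSum P u v g t = 0}) hg))

theorem stmt9 (n : ℕ) (hn : 1 ≤ n) (P : (Fin n → ℤ) →₀ ℝ) (hP : P ≠ 0)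
    -- the real stratum of the amoeba: image of the real points of `{P = 0}` under `Log`
    (AR : Set (Fin n → ℝ))
    (hAR : AR = (fun (x : Fin n → ℝ) (i : Fin n) => Real.log |x i|) ''
      {x | (∀ i, x i ≠ 0) ∧ realLaurentEval n P x = 0})
    -- `N = 2 ^ κ_M` : the number of sign patterns `α ↦ ε ^ α` on the support of `P`
    (N : ℕ)
    (hN : N = Set.ncard {g : {α // α ∈ P.support} → ℝ |
      ∃ ε : Fin n → ℝ, (∀ i, ε i = 1 ∨ ε i = -1) ∧ ∀ α, g α = ∏ i, ε i ^ (α.1 i)})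
    -- a line whose direction vector can be chosen integral
    (u : Fin n → ℝ) (w : Fin n → ℤ) (hw : w ≠ 0)
    (L : Set (Fin n → ℝ))
    (hL : L = Set.range fun t : ℝ => u + t • fun i => (w i : ℝ))
    (hfin : (L ∩ AR).Finite) :
    (L ∩ AR).ncard ≤ N * (P.support.card - 1) :=
  stmt9_general n P AR hAR N hN u w hw L hL hfin
end

section
/- Let p be a nonzero univariate real polynomial and let d be the number of nonzero coefficients of p. If all exponents in the support of p are congruent modulo 2 (i.e. they are all even or all odd), then the set {|r| : r ∈ ℝ, r ≠ 0, p(r) = 0} of absolute values of the nonzero real roots of p has at most d − 1 elements. -/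
/-!
Since all exponents have the same parity, `p (-x) = ± p x`, so `r ↦ |r|` sends the nonzero
real roots of `p` into its positive roots. By Descartes' rule of signs the positive roots are at
most the number of sign changes in the coefficient sequence, and a sequence of `d` nonzero
coefficients changes sign at most `d - 1` times.
-/

open Polynomial

namespace Polynomial

theorem signVariations_le_card_support_sub_one {R : Type*} [Semiring R] [LinearOrder R]
    (P : R[X]) : P.signVariations ≤ P.support.card - 1 := by
  induction hn : P.support.card generalizing P with
  | zero => simp [support_eq_empty.mp (Finset.card_eq_zero.mp hn)]
  | succ k ih =>
    have hlead := card_support_eraseLead' hn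
    rcases k.eq_zero_or_pos with rfl | hk
    · rw [Finset.card_eq_zero, support_eq_empty] at hlead
      rw [← eraseLead_add_monomial_natDegree_leadingCoeff P, hlead, zero_add,
        signVariations_monomial]
    · calc P.signVariations ≤ P.eraseLead.signVariations + 1 := signVariations_le_eraseLead_succ P
        _ ≤ k - 1 + 1 := by gcongr; exact ih _ hlead
        _ = k + 1 - 1 := by omega

theorem card_pos_roots_le_card_support_sub_one (P : ℝ[X]) :
    (P.roots.toFinset.filter (0 < ·)).card ≤ P.support.card - 1 :=
  calc (P.roots.toFinset.filter (0 < ·)).card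
      = (P.roots.filter (0 < ·)).toFinset.card := by rw [Multiset.toFinset_filter]
    _ ≤ P.roots.countP (0 < ·) := by
        rw [Multiset.countP_eq_card_filter]; exact Multiset.toFinset_card_le _
    _ ≤ P.signVariations := roots_countP_pos_le_signVariations P
    _ ≤ P.support.card - 1 := signVariations_le_card_support_sub_one P

theorem eval_neg_of_forall_mem_support_mod_two {R : Type*} [CommRing R] {p : R[X]} {n : ℕ}
    (h : ∀ m ∈ p.support, m % 2 = n % 2) (x : R) : p.eval (-x) = (-1) ^ n * p.eval x := by
  rw [eval_eq_sum, eval_eq_sum, sum_def, sum_def, Finset.mul_sum]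
  refine Finset.sum_congr rfl fun m hm => ?_
  rw [neg_pow, neg_one_pow_eq_pow_mod_two, h m hm, ← neg_one_pow_eq_pow_mod_two]
  ring

end Polynomial

theorem stmt10 (p : Polynomial ℝ) (hp : p ≠ 0) (d : ℕ) (hd : d = p.support.card)
    (hpar : ∀ m ∈ p.support, ∀ k ∈ p.support, m % 2 = k % 2) :
    {s : ℝ | ∃ r : ℝ, r ≠ 0 ∧ p.eval r = 0 ∧ s = |r|}.ncard ≤ d - 1 := by
  obtain ⟨n, hn⟩ : p.support.Nonempty := support_nonempty.mpr hp
  have heval := eval_neg_of_forall_mem_support_mod_two (fun m hm => hpar m hm n hn)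
  have habs_root : ∀ r, p.eval r = 0 → p.eval |r| = 0 := fun r hr => by
    rcases abs_choice r with h | h <;> simp [h, heval, hr]
  have hsub : {s : ℝ | ∃ r : ℝ, r ≠ 0 ∧ p.eval r = 0 ∧ s = |r|} ⊆
      ↑(p.roots.toFinset.filter (0 < ·)) := by
    rintro _ ⟨r, hr0, hr, rfl⟩
    simpa [hp, abs_pos.mpr hr0] using habs_root r hr
  calc _ ≤ (p.roots.toFinset.filter (0 < ·)).card :=
        (Set.ncard_le_ncard hsub (Finset.finite_toSet _)).trans (Set.ncard_coe_finset _).le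
    _ ≤ d - 1 := hd ▸ card_pos_roots_le_card_support_sub_one p
end

section
/- Let p be a nonzero univariate real polynomial whose support contains both an even exponent and an odd exponent, and let d ≥ 2 be the number of nonzero coefficients of p. Then the set {|r| : r ∈ ℝ, r ≠ 0, p(r) = 0} of absolute values of the nonzero real roots of p has at most 2d − 3 elements. -/
/-!
By Descartes' rule of signs, `p` has at most `V(p)` positive roots and at most `V(p(-X))`
negative ones, `V` counting sign changes in the coefficient sequence. Removing the leading term
of `p` lowers `V(p) + V(p(-X))` by at most `2`, and by at most `1` when the gap between the two
top exponents is odd. If the support contains exponents of both parities, some consecutive gap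
is odd, so `V(p) + V(p(-X)) ≤ 2d - 3`.
-/

open Polynomial Finset

namespace Polynomial

lemma eraseLead_comp_neg_X {R : Type*} [CommRing R] (p : R[X]) :
    (p.comp (-X)).eraseLead = p.eraseLead.comp (-X) := by
  rw [← self_sub_monomial_natDegree_leadingCoeff, ← self_sub_monomial_natDegree_leadingCoeff p,
    sub_comp, natDegree_eq_of_degree_eq degree_comp_neg_X, comp_neg_X_leadingCoeff_eq,
    monomial_comp, ← C_mul_X_pow_eq_monomial, neg_pow (X : R[X]), C_mul, C_pow, C_neg, C_1]
  ring

lemma signVariations_eq_zero_of_eraseLead_eq_zero {R : Type*} [Semiring R] [LinearOrder R]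
    {p : R[X]} (h : p.eraseLead = 0) : p.signVariations = 0 := by
  rw [← eraseLead_add_monomial_natDegree_leadingCoeff p, h, zero_add, signVariations_monomial]

variable {R : Type*} [CommRing R] [LinearOrder R] [IsStrictOrderedRing R]

/- The pair `(a, b)` of consecutive nonzero coefficients at exponents `n > m` becomes
`((-1)^n a, (-1)^m b)` in `p(-X)`: both pairs change sign or neither does if `n + m` is even,
exactly one does if it is odd. -/
lemma signChange_add_signChange_neg_one_pow_le (n m : ℕ) {a b : R} (ha : a ≠ 0) (hb : b ≠ 0) :
    ((if SignType.sign a = -SignType.sign b then 1 else 0) +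
      if SignType.sign ((-1) ^ n * a) = -SignType.sign ((-1) ^ m * b) then 1 else 0) ≤
      if Even (n + m) then 2 else 1 := by
  rcases n.even_or_odd with hn | hn <;> rcases m.even_or_odd with hm | hm <;>
    simp only [hn.neg_one_pow, hm.neg_one_pow, Nat.even_add, hn, hm,
      Nat.not_even_iff_odd.2, one_mul, neg_one_mul] <;>
    rcases ha.lt_or_gt with ha | ha <;> rcases hb.lt_or_gt with hb | hb <;>
    simp [sign_neg, sign_pos, ha, hb]

lemma signVariations_add_comp_neg_X_le_eraseLead {p : R[X]} (he : p.eraseLead ≠ 0) :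
    p.signVariations + (p.comp (-X)).signVariations ≤
      p.eraseLead.signVariations + (p.eraseLead.comp (-X)).signVariations +
        if Even (p.natDegree + p.eraseLead.natDegree) then 2 else 1 := by
  have hp : p ≠ 0 := fun h => he (by simp [h])
  rw [signVariations_eq_eraseLead_add_ite hp,
    signVariations_eq_eraseLead_add_ite (comp_neg_X_eq_zero_iff.not.2 hp), eraseLead_comp_neg_X,
    comp_neg_X_leadingCoeff_eq, comp_neg_X_leadingCoeff_eq]
  have := signChange_add_signChange_neg_one_pow_le p.natDegree p.eraseLead.natDegree
    (leadingCoeff_ne_zero.2 hp) (leadingCoeff_ne_zero.2 he)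
  omega

theorem signVariations_add_comp_neg_X_add_two_le {p : R[X]} (hp : p ≠ 0) :
    p.signVariations + (p.comp (-X)).signVariations + 2 ≤ 2 * #p.support := by
  have hcard := card_support_eraseLead_add_one hp
  by_cases he : p.eraseLead = 0
  · have he' : (p.comp (-X)).eraseLead = 0 := by rw [eraseLead_comp_neg_X, he, zero_comp]
    rw [signVariations_eq_zero_of_eraseLead_eq_zero he,
      signVariations_eq_zero_of_eraseLead_eq_zero he']
    simp only [he, support_zero, card_empty] at hcard
    omega
  · have := signVariations_add_comp_neg_X_add_two_le he
    have := signVariations_add_comp_neg_X_le_eraseLead he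
    split_ifs at this <;> omega
termination_by #p.support
decreasing_by exact eraseLead_support_card_lt hp

theorem signVariations_add_comp_neg_X_add_three_le {p : R[X]}
    (heven : ∃ m ∈ p.support, Even m) (hodd : ∃ m ∈ p.support, Odd m) :
    p.signVariations + (p.comp (-X)).signVariations + 3 ≤ 2 * #p.support := by
  have hp : p ≠ 0 := by rintro rfl; simp at heven
  have hcard := card_support_eraseLead_add_one hp
  obtain ⟨a, ha, ha_even⟩ := heven
  obtain ⟨b, hb, hb_odd⟩ := hodd
  have he : p.eraseLead ≠ 0 :=
    eraseLead_ne_zero (one_lt_card.2 ⟨a, ha, b, hb, by rintro rfl; grind⟩)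
  have hstep := signVariations_add_comp_neg_X_le_eraseLead he
  by_cases hboth : (∃ m ∈ p.eraseLead.support, Even m) ∧ ∃ m ∈ p.eraseLead.support, Odd m
  · have := signVariations_add_comp_neg_X_add_three_le hboth.1 hboth.2
    split_ifs at hstep <;> omega
  · have hgap : ¬ Even (p.natDegree + p.eraseLead.natDegree) := by
      have hm := natDegree_mem_support_of_nonzero he
      have hsplit : ∀ k ∈ p.support, k = p.natDegree ∨ k ∈ p.eraseLead.support := fun k hk => by
        rw [eraseLead_support, mem_erase]
        tauto
      rcases hsplit a ha with rfl | ha' <;> rcases hsplit b hb with rfl | hb' <;> grind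
    have := signVariations_add_comp_neg_X_add_two_le he
    rw [if_neg hgap] at hstep
    omega
termination_by #p.support
decreasing_by exact eraseLead_support_card_lt hp

lemma card_toFinset_filter_pos_roots_le_signVariations (p : R[X]) :
    #(p.roots.filter (0 < ·)).toFinset ≤ p.signVariations :=
  calc #(p.roots.filter (0 < ·)).toFinset
      _ ≤ Multiset.card (p.roots.filter (0 < ·)) := Multiset.toFinset_card_le _
      _ = p.roots.countP (0 < ·) := (Multiset.countP_eq_card_filter _ _).symm
      _ ≤ p.signVariations := roots_countP_pos_le_signVariations p

theorem ncard_abs_nonzero_roots_le_signVariations_add {p : R[X]} (hp : p ≠ 0) :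
    {s : R | ∃ r : R, r ≠ 0 ∧ p.eval r = 0 ∧ s = |r|}.ncard ≤
      p.signVariations + (p.comp (-X)).signVariations := by
  have hsub : {s : R | ∃ r : R, r ≠ 0 ∧ p.eval r = 0 ∧ s = |r|} ⊆
      ↑((p.roots.filter (0 < ·)).toFinset ∪ ((p.comp (-X)).roots.filter (0 < ·)).toFinset) := by
    rintro _ ⟨r, hr0, hr, rfl⟩
    simp only [coe_union, Set.mem_union, mem_coe, Multiset.mem_toFinset, Multiset.mem_filter,
      mem_roots hp, mem_roots (comp_neg_X_eq_zero_iff.not.2 hp), IsRoot, eval_comp, eval_neg,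
      eval_X, abs_pos.2 hr0, and_true]
    rcases hr0.lt_or_gt with hneg | hpos
    · exact Or.inr (by rwa [abs_of_neg hneg, neg_neg])
    · exact Or.inl (by rwa [abs_of_pos hpos])
  calc _ ≤ #((p.roots.filter (0 < ·)).toFinset ∪ ((p.comp (-X)).roots.filter (0 < ·)).toFinset) :=
        (Set.ncard_le_ncard hsub (Finset.finite_toSet _)).trans_eq (Set.ncard_coe_finset _)
    _ ≤ _ := card_union_le _ _
    _ ≤ _ := add_le_add (card_toFinset_filter_pos_roots_le_signVariations p)
        (card_toFinset_filter_pos_roots_le_signVariations _)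

end Polynomial

theorem stmt11_general (p : Polynomial ℝ) (hp : p ≠ 0)
    (heven : ∃ m ∈ p.support, Even m) (hodd : ∃ m ∈ p.support, Odd m)
    (d : ℕ) (hd : d = p.support.card) :
    {s : ℝ | ∃ r : ℝ, r ≠ 0 ∧ p.eval r = 0 ∧ s = |r|}.ncard ≤ 2 * d - 3 := by
  have hroots := ncard_abs_nonzero_roots_le_signVariations_add hp
  have hsigns := signVariations_add_comp_neg_X_add_three_le heven hodd
  omega

theorem stmt11 (p : Polynomial ℝ) (hp : p ≠ 0)
    (heven : ∃ m ∈ p.support, Even m) (hodd : ∃ m ∈ p.support, Odd m)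
    (d : ℕ) (hd : d = p.support.card) (hd2 : 2 ≤ d) :
    {s : ℝ | ∃ r : ℝ, r ≠ 0 ∧ p.eval r = 0 ∧ s = |r|}.ncard ≤ 2 * d - 3 :=
  stmt11_general p hp heven hodd d hd
end

section
/- For every integer d ≥ 2 there exists a univariate real polynomial p with exactly d nonzero coefficients (both even and odd exponents occurring) such that the set of absolute values of the nonzero real roots of p has exactly 2d − 3 elements; for instance p(x) = x·∏_{i=1}^{d−2}(x² − i) + t works for all sufficiently small t > 0. Moreover, for every integer d ≥ 1 there exists a univariate real polynomial q with exactly d nonzero coefficients, all of whose exponents are even, such that the set of absolute values of the nonzero real roots of q has exactly d − 1 elements. -/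
/-!
For positive `a i`, `∏ i ∈ s, (X ^ 2 - C (a i))` is `expand 2` of `∏ i ∈ s, (X - C (a i))`,
whose coefficients are, up to sign, elementary symmetric functions of the `a i`, hence all
nonzero: so it has exactly `#s + 1` terms, all of even degree, and its nonzero roots are the
`±√(a i)`. Taking `a i = 1, …, n` gives the even case.

In the mixed case `f = X * ∏_{i=1}^{n} (X ^ 2 - i)` is odd, so every `x > 0` with `|f x| = t`
is the absolute value of a nonzero root of `f + t`. Along `√(j / 2)`, `j = 0, …, 2n + 1`, the
function `|f| - t` alternates in sign: it is `-t` at the roots `√m` of `f`, and positive at the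
points `√(k + 1/2)` as soon as `t` is below the nonzero values `|f (√(k + 1/2))|`. The
intermediate value theorem yields `2n + 1` such `x`, and `deg (f + t) = 2n + 1` bounds the
count from above.
-/
open Polynomial Finset

theorem support_X_mul_add_C {R : Type*} [Semiring R] (P : R[X]) {t : R} (ht : t ≠ 0) :
    (X * P + C t).support = insert 0 (P.support.map (addRightEmbedding 1)) := by
  ext (_ | m)
  · simp [ht]
  · simp [coeff_X_mul]

theorem X_mul_add_C_ne_zero {R : Type*} [Semiring R] (P : R[X]) {t : R} (ht : t ≠ 0) :
    X * P + C t ≠ 0 := fun h => ht (by simpa using congr_arg (coeff · 0) h)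

section ProdXPowTwoSubC

variable {R ι : Type*} [CommRing R] (s : Finset ι)

theorem prod_X_pow_two_sub_C_eq_expand (a : ι → R) :
    ∏ i ∈ s, (X ^ 2 - C (a i)) = expand R 2 (∏ i ∈ s, (X - C (a i))) := by
  simp [map_prod]

theorem natDegree_prod_X_pow_two_sub_C [Nontrivial R] (a : ι → R) :
    (∏ i ∈ s, (X ^ 2 - C (a i))).natDegree = 2 * #s := by
  rw [prod_X_pow_two_sub_C_eq_expand, natDegree_expand, natDegree_finsetProd_X_sub_C_eq_card,
    mul_comm]

theorem eval_neg_prod_X_pow_two_sub_C (a : ι → R) (x : R) :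
    (∏ i ∈ s, (X ^ 2 - C (a i))).eval (-x) = (∏ i ∈ s, (X ^ 2 - C (a i))).eval x := by
  simp [eval_prod]

variable [LinearOrder R] [IsStrictOrderedRing R] {a : ι → R}

theorem coeff_prod_X_sub_C_ne_zero_of_pos (ha : ∀ i ∈ s, 0 < a i) {k : ℕ} (hk : k ≤ #s) :
    (∏ i ∈ s, (X - C (a i))).coeff k ≠ 0 := by
  rw [Finset.prod, show s.val.map (fun i => X - C (a i)) = (s.val.map a).map (X - C ·) by
    simp [Multiset.map_map], Multiset.prod_X_sub_C_coeff _ (by simpa using hk),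
    Multiset.card_map, Finset.esymm_map_val]
  refine mul_ne_zero (pow_ne_zero _ (by norm_num)) (sum_pos (fun t ht => prod_pos ?_) ?_).ne'
  · exact fun i hi => ha i (mem_powersetCard.mp ht |>.1 hi)
  · exact powersetCard_nonempty.mpr (Nat.sub_le _ _)

theorem support_prod_X_sub_C_of_pos (ha : ∀ i ∈ s, 0 < a i) :
    (∏ i ∈ s, (X - C (a i))).support = range (#s + 1) := by
  refine Subset.antisymm ?_ fun k hk => mem_support_iff.mpr ?_
  · rw [← natDegree_finsetProd_X_sub_C_eq_card s a]
    exact supp_subset_range_natDegree_succ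
  · exact coeff_prod_X_sub_C_ne_zero_of_pos s ha (Nat.lt_succ_iff.mp (mem_range.mp hk))

theorem support_prod_X_pow_two_sub_C_of_pos (ha : ∀ i ∈ s, 0 < a i) :
    (∏ i ∈ s, (X ^ 2 - C (a i))).support = (range (#s + 1)).image (2 * ·) := by
  ext m
  rw [prod_X_pow_two_sub_C_eq_expand, mem_support_iff, coeff_expand two_pos]
  split_ifs with h
  · rw [← mem_support_iff, support_prod_X_sub_C_of_pos s ha]
    simp only [mem_range, mem_image]
    constructor
    · exact fun hm => ⟨m / 2, hm, Nat.mul_div_cancel' h⟩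
    · rintro ⟨j, hj, rfl⟩
      omega
  · simp only [ne_eq, not_true_eq_false, mem_image, false_iff, not_exists, not_and]
    rintro j - rfl
    exact h (dvd_mul_right 2 j)

theorem card_support_prod_X_pow_two_sub_C_of_pos (ha : ∀ i ∈ s, 0 < a i) :
    #(∏ i ∈ s, (X ^ 2 - C (a i))).support = #s + 1 := by
  rw [support_prod_X_pow_two_sub_C_of_pos s ha,
    card_image_of_injective _ (mul_right_injective₀ two_ne_zero), card_range]

end ProdXPowTwoSubC

def absNonzeroRoots (p : ℝ[X]) : Set ℝ := {s | ∃ r, r ≠ 0 ∧ p.eval r = 0 ∧ s = |r|}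

section AbsNonzeroRoots

variable {p : ℝ[X]}

theorem absNonzeroRoots_subset_image_abs (hp : p ≠ 0) :
    absNonzeroRoots p ⊆ abs '' (p.roots.toFinset : Set ℝ) := by
  rintro _ ⟨r, -, hr, rfl⟩
  exact ⟨r, by simpa [hp] using hr, rfl⟩

theorem finite_absNonzeroRoots (hp : p ≠ 0) : (absNonzeroRoots p).Finite :=
  ((p.roots.toFinset.finite_toSet).image abs).subset (absNonzeroRoots_subset_image_abs hp)

theorem ncard_absNonzeroRoots_le_natDegree (hp : p ≠ 0) :
    (absNonzeroRoots p).ncard ≤ p.natDegree :=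
  calc (absNonzeroRoots p).ncard
      ≤ (abs '' (p.roots.toFinset : Set ℝ)).ncard :=
        Set.ncard_le_ncard (absNonzeroRoots_subset_image_abs hp) (Set.toFinite _)
    _ ≤ p.roots.toFinset.card := by
        simpa only [Set.ncard_coe_finset] using
          Set.ncard_image_le (f := abs) p.roots.toFinset.finite_toSet
    _ ≤ p.natDegree := p.roots.toFinset_card_le.trans p.card_roots'

theorem mem_absNonzeroRoots_add_C {f : ℝ[X]} (hf : ∀ x, f.eval (-x) = -f.eval x) {t x : ℝ}
    (hx : 0 < x) (hfx : |f.eval x| = t) : x ∈ absNonzeroRoots (f + C t) := by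
  rcases abs_eq (hfx ▸ abs_nonneg _) |>.mp hfx with h | h
  · exact ⟨-x, neg_ne_zero.mpr hx.ne', by simp [hf, h], by simp [abs_of_pos hx]⟩
  · exact ⟨x, hx.ne', by simp [h], (abs_of_pos hx).symm⟩

theorem absNonzeroRoots_prod_X_pow_two_sub_C {ι : Type*} (s : Finset ι) {a : ι → ℝ}
    (ha : ∀ i ∈ s, 0 < a i) :
    absNonzeroRoots (∏ i ∈ s, (X ^ 2 - C (a i))) = (fun i => √(a i)) '' s := by
  ext u
  simp only [absNonzeroRoots, eval_prod, eval_sub, eval_pow, eval_X, eval_C, prod_eq_zero_iff,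
    sub_eq_zero, Set.mem_ofPred_eq, Set.mem_image, mem_coe]
  constructor
  · rintro ⟨r, -, ⟨i, hi, hr⟩, rfl⟩
    exact ⟨i, hi, by rw [← hr, Real.sqrt_sq_eq_abs]⟩
  · rintro ⟨i, hi, rfl⟩
    have hsqrt := Real.sqrt_pos.mpr (ha i hi)
    exact ⟨√(a i), hsqrt.ne', ⟨i, hi, Real.sq_sqrt (ha i hi).le⟩, (abs_of_pos hsqrt).symm⟩

end AbsNonzeroRoots

theorem exists_mem_Ioo_eq_zero_of_mul_neg {g : ℝ → ℝ} (hg : Continuous g) {a b : ℝ} (hab : a ≤ b)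
    (h : g a * g b < 0) : ∃ r ∈ Set.Ioo a b, g r = 0 := by
  rcases mul_neg_iff.mp h with ⟨ha, hb⟩ | ⟨ha, hb⟩
  · exact intermediate_value_Ioo' hab hg.continuousOn ⟨hb, ha⟩
  · exact intermediate_value_Ioo hab hg.continuousOn ⟨ha, hb⟩

theorem le_ncard_of_sign_changes {g : ℝ → ℝ} (hg : Continuous g) {y : ℕ → ℝ} (hy : StrictMono y)
    {m : ℕ} (hsign : ∀ j < m, g (y j) * g (y (j + 1)) < 0) {S : Set ℝ} (hS : S.Finite)
    (hzero : ∀ x, y 0 < x → g x = 0 → x ∈ S) : m ≤ S.ncard := by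
  choose! r hr hr0 using fun j (hj : j < m) =>
    exists_mem_Ioo_eq_zero_of_mul_neg hg (hy (Nat.lt_succ_self j)).le (hsign j hj)
  have hmono : StrictMonoOn r (Set.Iio m) := fun i hi j hj hij =>
    calc r i < y (i + 1) := (hr i hi).2
      _ ≤ y j := hy.monotone hij
      _ < r j := (hr j hj).1
  calc m = ((range m).image r).card := by
        rw [card_image_of_injOn (by simpa using hmono.injOn), card_range]
    _ = ((range m).image r : Set ℝ).ncard := (Set.ncard_coe_finset _).symm
    _ ≤ S.ncard := by
      refine Set.ncard_le_ncard ?_ hS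
      simp only [coe_image, coe_range, Set.image_subset_iff]
      intro j hj
      exact hzero _ ((hy.monotone j.zero_le).trans_lt (hr j hj).1) (hr0 j hj)

section SqrtNat

variable (n : ℕ)

theorem eval_X_mul_prod_sqrt_natCast_eq_zero {m : ℕ} (hm : m ≤ n) :
    (X * ∏ i ∈ range n, (X ^ 2 - C ((i : ℝ) + 1))).eval √m = 0 := by
  rcases m.eq_zero_or_eq_succ_pred with rfl | hm'
  · simp
  · rw [eval_mul, eval_prod]
    refine mul_eq_zero_of_right _ (prod_eq_zero (mem_range.mpr (by omega : m - 1 < n)) ?_)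
    simp [Real.sq_sqrt, Nat.cast_pred (by omega : 0 < m)]

theorem eval_X_mul_prod_sqrt_add_half_ne_zero (k : ℕ) :
    (X * ∏ i ∈ range n, (X ^ 2 - C ((i : ℝ) + 1))).eval √(k + 1 / 2) ≠ 0 := by
  rw [eval_mul, eval_prod, eval_X]
  refine mul_ne_zero (Real.sqrt_pos.mpr (by positivity)).ne' (prod_ne_zero_iff.mpr fun i _ => ?_)
  rw [eval_sub, eval_pow, eval_X, eval_C, Real.sq_sqrt (by positivity)]
  intro h
  have : (2 * k + 1 : ℝ) = 2 * i + 2 := by linarith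
  exact (by omega : 2 * k + 1 ≠ 2 * i + 2) (by exact_mod_cast this)

end SqrtNat

theorem ncard_absNonzeroRoots_X_mul_prod_add_C_le (n : ℕ) {t : ℝ} (ht : t ≠ 0) :
    (absNonzeroRoots (X * ∏ i ∈ range n, (X ^ 2 - C ((i : ℝ) + 1)) + C t)).ncard ≤ 2 * n + 1 := by
  set f := X * ∏ i ∈ range n, (X ^ 2 - C ((i : ℝ) + 1))
  calc _ ≤ (f + C t).natDegree := ncard_absNonzeroRoots_le_natDegree (X_mul_add_C_ne_zero _ ht)
    _ = f.natDegree := natDegree_add_C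
    _ ≤ 1 + 2 * #(range n) :=
      natDegree_mul_le_of_le natDegree_X_le (natDegree_prod_X_pow_two_sub_C _ _).le
    _ = 2 * n + 1 := by rw [card_range, add_comm]

theorem exists_pos_ncard_absNonzeroRoots_X_mul_prod_add_C (n : ℕ) :
    ∃ t₀ : ℝ, 0 < t₀ ∧ ∀ t : ℝ, 0 < t → t < t₀ →
      (absNonzeroRoots (X * ∏ i ∈ range n, (X ^ 2 - C ((i : ℝ) + 1)) + C t)).ncard = 2 * n + 1 := by
  set f := X * ∏ i ∈ range n, (X ^ 2 - C ((i : ℝ) + 1))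
  have hodd (x : ℝ) : f.eval (-x) = -f.eval x := by
    simp only [f, eval_mul, eval_X, eval_neg_prod_X_pow_two_sub_C, neg_mul]
  set t₀ := (range (n + 1)).inf' nonempty_range_add_one fun k => |f.eval √(k + 1 / 2)|
  have ht₀ : 0 < t₀ := lt_inf'_iff _ |>.mpr fun k _ =>
    abs_pos.mpr (eval_X_mul_prod_sqrt_add_half_ne_zero n k)
  refine ⟨t₀, ht₀, fun t ht htt₀ => ?_⟩
  refine le_antisymm (ncard_absNonzeroRoots_X_mul_prod_add_C_le n ht.ne') ?_
  set g := fun x => |f.eval x| - t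
  have hneg {m : ℕ} (hm : m ≤ n) : g √m < 0 := by
    simp [g, show f.eval √m = 0 from eval_X_mul_prod_sqrt_natCast_eq_zero n hm, ht]
  have hpos {k : ℕ} (hk : k ≤ n) : 0 < g √(k + 1 / 2) :=
    sub_pos.mpr (htt₀.trans_le (inf'_le _ (mem_range_succ_iff.mpr hk)))
  set y := fun j : ℕ => √((j : ℝ) / 2)
  have hy : StrictMono y := fun i j hij => Real.sqrt_lt_sqrt (by positivity) (by gcongr)
  have hy_even (k : ℕ) : y (2 * k) = √k := by simp [y]
  have hy_odd (k : ℕ) : y (2 * k + 1) = √(k + 1 / 2) := by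
    simp only [y]
    congr 1
    push_cast
    ring
  refine le_ncard_of_sign_changes (g := g) (by fun_prop) hy (fun j hj => ?_)
    (finite_absNonzeroRoots (X_mul_add_C_ne_zero _ ht.ne'))
    (fun x hx hgx => mem_absNonzeroRoots_add_C hodd (by simpa [y] using hx) (sub_eq_zero.mp hgx))
  obtain ⟨k, rfl | rfl⟩ := j.even_or_odd'
  · rw [hy_even, hy_odd]
    exact mul_neg_of_neg_of_pos (hneg (by omega)) (hpos (by omega))
  · rw [hy_odd, show 2 * k + 1 + 1 = 2 * (k + 1) by ring, hy_even]
    exact mul_neg_of_pos_of_neg (hpos (by omega)) (hneg (by omega))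

theorem stmt12 :
    -- sharpness of the bound `2d - 3`, realized by `x · ∏_{i=1}^{d-2} (x² - i) + t`
    -- for all sufficiently small `t > 0`
    (∀ d : ℕ, 2 ≤ d → ∃ t₀ : ℝ, 0 < t₀ ∧ ∀ t : ℝ, 0 < t → t < t₀ →
      ∃ p : Polynomial ℝ,
        p = X * (∏ i ∈ Finset.range (d - 2), (X ^ 2 - C ((i : ℝ) + 1))) + C t ∧
        p.support.card = d ∧
        (∃ m ∈ p.support, Even m) ∧ (∃ m ∈ p.support, Odd m) ∧
        {s : ℝ | ∃ r : ℝ, r ≠ 0 ∧ p.eval r = 0 ∧ s = |r|}.ncard = 2 * d - 3) ∧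
    -- sharpness of the bound `d - 1` in the equal-parity case
    (∀ d : ℕ, 1 ≤ d → ∃ q : Polynomial ℝ,
      q.support.card = d ∧ (∀ m ∈ q.support, Even m) ∧
      {s : ℝ | ∃ r : ℝ, r ≠ 0 ∧ q.eval r = 0 ∧ s = |r|}.ncard = d - 1) := by
  have hpos (n : ℕ) : ∀ i ∈ range n, 0 < (i : ℝ) + 1 := fun i _ => i.cast_add_one_pos
  refine ⟨fun d hd => ?_, fun d hd => ?_⟩
  · obtain ⟨t₀, ht₀, hroots⟩ := exists_pos_ncard_absNonzeroRoots_X_mul_prod_add_C (d - 2)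
    refine ⟨t₀, ht₀, fun t ht htt₀ => ⟨_, rfl, ?_, ⟨0, ?_, .zero⟩, ⟨1, ?_, odd_one⟩,
      (hroots t ht htt₀).trans (by omega)⟩⟩
    all_goals rw [support_X_mul_add_C _ ht.ne']
    · rw [card_insert_of_notMem (by simp), card_map,
        card_support_prod_X_pow_two_sub_C_of_pos _ (hpos _), card_range]
      omega
    · exact mem_insert_self _ _
    · rw [support_prod_X_pow_two_sub_C_of_pos _ (hpos _)]
      simp
  · refine ⟨∏ i ∈ range (d - 1), (X ^ 2 - C ((i : ℝ) + 1)), ?_, ?_, ?_⟩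
    · rw [card_support_prod_X_pow_two_sub_C_of_pos _ (hpos _), card_range]
      omega
    · rw [support_prod_X_pow_two_sub_C_of_pos _ (hpos _)]
      simp
    · change (absNonzeroRoots _).ncard = _
      rw [absNonzeroRoots_prod_X_pow_two_sub_C _ (hpos _), Set.InjOn.ncard_image,
        Set.ncard_coe_finset, card_range]
      intro i _ j _ h
      simpa using (Real.sqrt_inj i.cast_add_one_pos.le j.cast_add_one_pos.le).mp h
end

section
/- Let a ∈ ℝ with a > 1. Then for every z ∈ ℂ, the imaginary part of (z² − z)·conj(z² − 2z + a) is zero if and only if Im z = 0 or (Re z − a)² + (Im z)² = a(a − 1). -/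
theorem stmt13 (a : ℝ) (ha : 1 < a) (z : ℂ) :
    ((z ^ 2 - z) * (starRingEnd ℂ) (z ^ 2 - 2 * z + (a : ℂ))).im = 0 ↔
      z.im = 0 ∨ (z.re - a) ^ 2 + z.im ^ 2 = a * (a - 1) := by
  have key : ((z ^ 2 - z) * (starRingEnd ℂ) (z ^ 2 - 2 * z + (a : ℂ))).im =
      -(z.im * ((z.re - a) ^ 2 + z.im ^ 2 - a * (a - 1))) := by
    simp [Complex.mul_im, Complex.sub_im, Complex.sub_re, Complex.add_im, Complex.add_re,
      pow_two, Complex.mul_re]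
    ring
  rw [key, neg_eq_zero, mul_eq_zero, sub_eq_zero]
end
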